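/- arXiv:2107.04753 — 2 statements merged into one kernel-verified Lean document; each statement's English description precedes it below -/
import Mathlib

section
/- Let (V,Y,1,s) be an H-module vertex algebra where H = kG is the group Hopf algebra of a finite subgroup G of Aut(V), and fix f(z) = z^{−1} or f(z) = c·e^{cz}/(e^{cz}−1) (c ≠ 0), g = ∂_z f. Then for each n ∈ Z≥0: (i) A(V#H#H*) ≅ A(V)#H#H* as associative algebras; (ii) A(M(n,V)) ≅ A(V)⊗M(n,k) ≅ M(n,A(V)) as associative algebras, where M(n,V) = V⊗M(n,k) is the S-local vertex algebra of n×n matrices over V. -/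
open scoped TensorProduct DirectSum

namespace HopfVA

/-- Generalized binomial coefficient `C(r, j)` for an integer `r` (exact division). -/
def ibinom (r : ℤ) (j : ℕ) : ℤ := (∏ i ∈ Finset.range j, (r - (i : ℤ))) / (j.factorial : ℤ)

/-- `(-1)^q` for an integer exponent `q`. -/
def negOnePow (q : ℤ) : ℤ := if Even q then 1 else -1

section Core

variable {k : Type*} [CommRing k] {V : Type*} [AddCommGroup V] [Module k V]

/-- If `f p q` is the coefficient of `z^p w^q` of a two-variable formal distribution,
then `zwMul n f p q` is the coefficient of `z^p w^q` of `(z-w)^n` times that distribution. -/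
def zwMul (n : ℕ) (f : ℤ → ℤ → V) : ℤ → ℤ → V := fun p q =>
  ∑ i ∈ Finset.range (n + 1),
    ((-1 : ℤ) ^ i * (n.choose i : ℤ)) • f (p - ((n : ℤ) - (i : ℤ))) (q - (i : ℤ))

/-- The data of a state-field correspondence on a pointed vector space:
`Y a n b` is the `n`-th product `a_n b` (so that `Y(a,z)b = ∑ (a_n b) z^{-n-1}`),
`vac` is the vacuum vector and `T` is the translation operator. -/
structure VAData (k V : Type*) [CommRing k] [AddCommGroup V] [Module k V] where
  Y : V →ₗ[k] ℤ → Module.End k V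
  vac : V
  T : Module.End k V

namespace VAData

variable (F : VAData k V)

/-- coefficient of `z^p w^q` in `Y(a,z)Y(b,w)c`. -/
def prodZW (a b c : V) : ℤ → ℤ → V := fun p q => F.Y a (-p - 1) (F.Y b (-q - 1) c)

/-- coefficient of `z^p w^q` in `Y(b,w)Y(a,z)c`. -/
def prodWZ (a b c : V) : ℤ → ℤ → V := fun p q => F.Y b (-q - 1) (F.Y a (-p - 1) c)

/-- coefficient of `z^p w^q` in `i_{z,w} Y(a,z-w)Y(b,-w)c`. -/
noncomputable def compLHS (a b c : V) : ℤ → ℤ → V := fun p q =>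
  negOnePow q •
    ∑ᶠ j : ℕ, ibinom (p + (j : ℤ)) j • F.Y a (-p - 1 - (j : ℤ)) (F.Y b ((j : ℤ) - 1 - q) c)

/-- Truncated (at `j < J`) version of `compLHS`, for `h`-adic statements. -/
def compLHStr (J : ℕ) (a b c : V) : ℤ → ℤ → V := fun p q =>
  negOnePow q •
    ∑ j ∈ Finset.range J, ibinom (p + (j : ℤ)) j • F.Y a (-p - 1 - (j : ℤ)) (F.Y b ((j : ℤ) - 1 - q) c)

/-- coefficient of `z^p w^q` in `Y(Y(a,z)b,-w)c`. -/
def compRHS (a b c : V) : ℤ → ℤ → V := fun p q =>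
  negOnePow q • F.Y (F.Y a (-p - 1) b) (-q - 1) c

/-- The axioms of a state-field correspondence: truncation, the vacuum axioms
`Y(1,z)a = a`, `Y(a,z)1 = a + (Ta)z + ⋯ ∈ V[[z]]`, and translation covariance
`[T, Y(a,z)] = Y(Ta,z) = ∂_z Y(a,z)`. -/
def IsStateField : Prop :=
  (∀ a b : V, ∃ N : ℤ, ∀ n : ℤ, N ≤ n → F.Y a n b = 0) ∧
  (∀ (a : V) (n : ℤ), F.Y F.vac n a = if n = -1 then a else 0) ∧
  (∀ (a : V) (n : ℤ), 0 ≤ n → F.Y a n F.vac = 0) ∧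
  (∀ a : V, F.Y a (-1) F.vac = a) ∧
  (∀ a : V, F.Y a (-2) F.vac = F.T a) ∧
  (∀ (a b : V) (n : ℤ), F.Y (F.T a) n b = F.T (F.Y a n b) - F.Y a n (F.T b)) ∧
  (∀ (a b : V) (n : ℤ), F.Y (F.T a) n b = (-n : ℤ) • F.Y a (n - 1) b)

/-- The associativity relation
`(z-w)^N i_{z,w} Y(a,z-w)Y(b,-w)c = (z-w)^N Y(Y(a,z)b,-w)c`. -/
def IsAssocFA : Prop := ∀ a b c : V, ∃ N : ℕ, ∀ p q : ℤ,
  zwMul N (F.compLHS a b c) p q = zwMul N (F.compRHS a b c) p q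

/-- A field algebra is a state-field correspondence satisfying associativity. -/
def IsFieldAlgebra : Prop := F.IsStateField ∧ F.IsAssocFA

/-- `(z-w)^n [Y(a,z), Y(b,w)] = 0`. -/
def IsLocalPair (a b : V) : Prop :=
  ∃ n : ℕ, ∀ (c : V) (p q : ℤ), zwMul n (F.prodZW a b c) p q = zwMul n (F.prodWZ a b c) p q

/-- A vertex algebra is a field algebra all of whose pairs of fields are local. -/
def IsVertexAlgebra : Prop := F.IsFieldAlgebra ∧ ∀ a b : V, F.IsLocalPair a b

/-- `(z-w)^n Y(a,z)Y(b,w) = (z-w)^n ∑ᵢ Y(bⁱ,w)Y(aⁱ,z)`. -/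
def IsSLocalPair (a b : V) : Prop :=
  ∃ (n m : ℕ) (A B : Fin m → V), ∀ (c : V) (p q : ℤ),
    zwMul n (F.prodZW a b c) p q = ∑ i, zwMul n (F.prodWZ (A i) (B i) c) p q

/-- An `S`-local vertex algebra is a field algebra all of whose pairs of fields
are `S`-local. -/
def IsSLocalVA : Prop := F.IsFieldAlgebra ∧ ∀ a b : V, F.IsSLocalPair a b

end VAData

/-- Data of a module over a field algebra: the module fields `Y^M` and translation `sM`. -/
structure VModData (k V M : Type*) [CommRing k] [AddCommGroup V] [Module k V]
    [AddCommGroup M] [Module k M] where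
  YM : V →ₗ[k] ℤ → Module.End k M
  sM : Module.End k M

namespace VModData

variable {M : Type*} [AddCommGroup M] [Module k M]

/-- coefficient of `z^p w^q` in `Y^M(a,z)Y^M(b,w)x`. -/
def mprodZW (Mo : VModData k V M) (a b : V) (x : M) : ℤ → ℤ → M := fun p q =>
  Mo.YM a (-p - 1) (Mo.YM b (-q - 1) x)

/-- coefficient of `z^p w^q` in `Y^M(b,w)Y^M(a,z)x`. -/
def mprodWZ (Mo : VModData k V M) (a b : V) (x : M) : ℤ → ℤ → M := fun p q =>
  Mo.YM b (-q - 1) (Mo.YM a (-p - 1) x)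

/-- coefficient of `z^p w^q` in `i_{z,w} Y^M(a,z-w)Y^M(b,-w)x`. -/
noncomputable def mcompLHS (Mo : VModData k V M) (a b : V) (x : M) : ℤ → ℤ → M := fun p q =>
  negOnePow q •
    ∑ᶠ j : ℕ, ibinom (p + (j : ℤ)) j • Mo.YM a (-p - 1 - (j : ℤ)) (Mo.YM b ((j : ℤ) - 1 - q) x)

/-- coefficient of `z^p w^q` in `Y^M(Y(a,z)b,-w)x`. -/
def mcompRHS (F : VAData k V) (Mo : VModData k V M) (a b : V) (x : M) : ℤ → ℤ → M := fun p q =>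
  negOnePow q • Mo.YM (F.Y a (-p - 1) b) (-q - 1) x

/-- `M` is a left module over the field algebra `F`: truncation, vacuum, translation
invariance and the associativity axiom. -/
def IsModule (F : VAData k V) (Mo : VModData k V M) : Prop :=
  (∀ (a : V) (x : M), ∃ N : ℤ, ∀ n : ℤ, N ≤ n → Mo.YM a n x = 0) ∧
  (∀ (x : M) (n : ℤ), Mo.YM F.vac n x = if n = -1 then x else 0) ∧
  (∀ (a : V) (x : M) (n : ℤ),
      Mo.sM (Mo.YM a n x) - Mo.YM a n (Mo.sM x) = (-n : ℤ) • Mo.YM a (n - 1) x) ∧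
  (∀ (a b : V) (x : M), ∃ N : ℕ, ∀ p q : ℤ,
      zwMul N (mcompLHS Mo a b x) p q = zwMul N (mcompRHS F Mo a b x) p q)

/-- Locality of the module fields `Y^M(a,z)`, `Y^M(b,w)`. -/
def IsLocalModPair (Mo : VModData k V M) (a b : V) : Prop :=
  ∃ n : ℕ, ∀ (x : M) (p q : ℤ),
    zwMul n (mprodZW Mo a b x) p q = zwMul n (mprodWZ Mo a b x) p q

/-- `S`-locality of the module fields. -/
def IsSLocalModPair (Mo : VModData k V M) (a b : V) : Prop :=
  ∃ (n m : ℕ) (A B : Fin m → V), ∀ (x : M) (p q : ℤ),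
    zwMul n (mprodZW Mo a b x) p q = ∑ i, zwMul n (mprodWZ Mo (A i) (B i) x) p q

end VModData

/-- The `f`-product `a_(f) b = Res_z f(z) Y(a,z) b`, where `f n` is the coefficient
of `z^n` in `f`. -/
noncomputable def fProduct (F : VAData k V) (f : ℤ → k) (a b : V) : V :=
  ∑ᶠ n : ℤ, f n • F.Y a n b

/-- Coefficients of the formal derivative `∂_z f`. -/
def derivCoef (f : ℤ → k) : ℤ → k := fun n => ((n : ℤ) + 1 : ℤ) • f (n + 1)

/-- The subspace `V_(g) V` spanned by all products `a_(g) b` with `g = ∂_z f`. -/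
noncomputable def gSpan (F : VAData k V) (f : ℤ → k) : Submodule k V :=
  Submodule.span k {x : V | ∃ a b : V, x = fProduct F (derivCoef f) a b}

/-- `x ≡ y mod h^M`, where `h = r`. -/
def ModH (r : k) (M : ℕ) (x y : V) : Prop := ∃ v : V, x - y = r ^ M • v

/-- An automorphism of the (state-field data of a) vertex algebra `F`. -/
def IsVAAut (F : VAData k V) (φ : V ≃ₗ[k] V) : Prop :=
  φ F.vac = F.vac ∧ (∀ v : V, φ (F.T v) = F.T (φ v)) ∧
  ∀ (a b : V) (n : ℤ), φ (F.Y a n b) = F.Y (φ a) n (φ b)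

end Core

/-- The coefficients of `f(z) = z⁻¹`. -/
def zinvCoef (k : Type*) [CommRing k] : ℤ → k := fun n => if n = -1 then 1 else 0

/-- The coefficients of `f(z) = c·e^{cz}/(e^{cz}-1)
  = z⁻¹ + c + ∑_{m≥1} B_m c^m z^{m-1}/m!` (Bernoulli numbers `B_m`). -/
noncomputable def berCoef {k : Type*} [Field k] [CharZero k] (c : k) : ℤ → k := fun n =>
  if n < -1 then 0
  else ((bernoulli (n + 1).toNat : ℚ) • (c ^ (n + 1).toNat)) / ((n + 1).toNat.factorial : k)
        + (if n = 0 then c else 0)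

/-- `f(z) = z⁻¹` or `f(z) = c·e^{cz}/(e^{cz}-1)` with `c ≠ 0`. -/
def AdmissibleF {k : Type*} [Field k] [CharZero k] (f : ℤ → k) : Prop :=
  f = zinvCoef k ∨ ∃ c : k, c ≠ 0 ∧ f = berCoef c

section HopfDefs

variable {k : Type*} [CommRing k] {V : Type*} [AddCommGroup V] [Module k V]
variable (H : Type*) [Ring H] [HopfAlgebra k H]

/-- `V` is an `H`-module field algebra: `h·1 = ε(h)1`, `h(Ta) = T(ha)` and
`h(aₙb) = ∑ (h₁a)ₙ(h₂b)` (the last condition quantified over all finite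
representations of `Δ(h)`). -/
def IsHModuleFA [Module H V] [IsScalarTower k H V] (F : VAData k V) : Prop :=
  (∀ h : H, h • F.vac = (Coalgebra.counit (R := k) h) • F.vac) ∧
  (∀ (h : H) (a : V), h • (F.T a : V) = F.T (h • a)) ∧
  (∀ (h : H) (a b : V) (n : ℤ) (m : ℕ) (h1 h2 : Fin m → H),
      Coalgebra.comul (R := k) h = ∑ i, h1 i ⊗ₜ[k] h2 i →
      h • (F.Y a n b : V) = ∑ i, F.Y (h1 i • a) n (h2 i • b))

/-- The smash product structure `V # H` on `V ⊗ H`: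
`Y(a#h,z)(b#g) = ∑ Y(a,z)(h₁b) # h₂g`, vacuum `1#1`, translation `T#1`. -/
def SmashChar [Module H V] [IsScalarTower k H V] (F : VAData k V)
    (FS : VAData k (V ⊗[k] H)) : Prop :=
  (∀ (a b : V) (h g : H) (n : ℤ) (m : ℕ) (h1 h2 : Fin m → H),
      Coalgebra.comul (R := k) h = ∑ i, h1 i ⊗ₜ[k] h2 i →
      FS.Y (a ⊗ₜ[k] h) n (b ⊗ₜ[k] g) = ∑ i, (F.Y a n (h1 i • b) : V) ⊗ₜ[k] (h2 i * g)) ∧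
  (FS.vac = F.vac ⊗ₜ[k] (1 : H)) ∧
  (∀ (a : V) (h : H), FS.T (a ⊗ₜ[k] h) = (F.T a : V) ⊗ₜ[k] h)

end HopfDefs

/-- The fixed point subspace `V^H = {v | h v = ε(h) v for all h}`. -/
def hFixed (k V H : Type*) [CommRing k] [AddCommGroup V] [Module k V]
    [Ring H] [HopfAlgebra k H] [Module H V] [IsScalarTower k H V]
    [SMulCommClass k H V] : Submodule k V where
  carrier := {v : V | ∀ h : H, h • v = (Coalgebra.counit (R := k) h) • v}
  add_mem' := by
    intro a b ha hb h
    rw [smul_add, ha h, hb h, ← smul_add]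
  zero_mem' := by
    intro h
    simp
  smul_mem' := by
    intro c v hv h
    rw [← smul_comm c h v, hv h, smul_smul, smul_smul, mul_comm]

end HopfVA

namespace HopfVA

section AuxProof

variable {k : Type*} [Field k] {V : Type*} [AddCommGroup V] [Module k V]

/-- Truncation property of a state-field data. -/
def Trunc (F : VAData k V) : Prop := ∀ a b : V, ∃ N : ℤ, ∀ n : ℤ, N ≤ n → F.Y a n b = 0

/-- Vanishing of coefficients below degree `-2`. -/
def LowVanish (φ : ℤ → k) : Prop := ∀ n : ℤ, n < -2 → φ n = 0

lemma admissible_vanish {k : Type*} [Field k] [CharZero k] {f : ℤ → k}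
    (hf : AdmissibleF f) : ∀ n : ℤ, n < -1 → f n = 0 := by
  intro n hn
  rcases hf with rfl | ⟨c, _, rfl⟩
  · simp only [zinvCoef]; rw [if_neg (by omega)]
  · simp only [berCoef]; rw [if_pos (by omega)]

lemma admissible_lowVanish {k : Type*} [Field k] [CharZero k] {f : ℤ → k}
    (hf : AdmissibleF f) : LowVanish f := fun n hn => admissible_vanish hf n (by omega)

lemma admissible_lowVanish_deriv {k : Type*} [Field k] [CharZero k] {f : ℤ → k}
    (hf : AdmissibleF f) : LowVanish (derivCoef f) := by
  intro n hn
  rw [derivCoef, admissible_vanish hf (n + 1) (by omega), smul_zero]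

lemma Y_add_left (F : VAData k V) (a a' b : V) (m : ℤ) :
    F.Y (a + a') m b = F.Y a m b + F.Y a' m b := by rw [map_add]; rfl

lemma Y_smul_left (F : VAData k V) (c : k) (a b : V) (m : ℤ) :
    F.Y (c • a) m b = c • F.Y a m b := by rw [map_smul]; rfl

lemma Y_zero_left (F : VAData k V) (b : V) (m : ℤ) : F.Y 0 m b = 0 := by
  rw [map_zero]; rfl

lemma support_subset_Icc (F : VAData k V) {φ : ℤ → k} (hlow : LowVanish φ) {a b : V} {N : ℤ}
    (hN : ∀ n : ℤ, N ≤ n → F.Y a n b = 0) :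
    (Function.support fun m : ℤ => φ m • F.Y a m b) ⊆ ↑(Finset.Icc (-2 : ℤ) N) := by
  intro m hm
  rw [Function.mem_support] at hm
  simp only [Finset.coe_Icc, Set.mem_Icc]
  constructor
  · by_contra hcon
    exact hm (by rw [hlow m (by omega), zero_smul])
  · by_contra hcon
    exact hm (by rw [hN m (by omega), smul_zero])

lemma fProduct_eq_sum (F : VAData k V) {φ : ℤ → k} (hlow : LowVanish φ) {a b : V} {N : ℤ}
    (hN : ∀ n : ℤ, N ≤ n → F.Y a n b = 0) :
    fProduct F φ a b = ∑ m ∈ Finset.Icc (-2 : ℤ) N, φ m • F.Y a m b :=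
  finsum_eq_sum_of_support_subset _ (support_subset_Icc F hlow hN)

lemma fProduct_zero_left (F : VAData k V) (φ : ℤ → k) (b : V) :
    fProduct F φ 0 b = 0 := by
  simp [fProduct]

lemma fProduct_zero_right (F : VAData k V) (φ : ℤ → k) (a : V) :
    fProduct F φ a 0 = 0 := by
  simp [fProduct]

lemma fProduct_add_left (F : VAData k V) (htr : Trunc F) {φ : ℤ → k} (hlow : LowVanish φ)
    (a a' b : V) : fProduct F φ (a + a') b = fProduct F φ a b + fProduct F φ a' b := by
  obtain ⟨N1, h1⟩ := htr a b
  obtain ⟨N2, h2⟩ := htr a' b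
  have h1' : ∀ m : ℤ, max N1 N2 ≤ m → F.Y a m b = 0 :=
    fun m hm => h1 m (le_trans (le_max_left _ _) hm)
  have h2' : ∀ m : ℤ, max N1 N2 ≤ m → F.Y a' m b = 0 :=
    fun m hm => h2 m (le_trans (le_max_right _ _) hm)
  have h3' : ∀ m : ℤ, max N1 N2 ≤ m → F.Y (a + a') m b = 0 := fun m hm => by
    rw [Y_add_left, h1' m hm, h2' m hm, add_zero]
  rw [fProduct_eq_sum F hlow h3', fProduct_eq_sum F hlow h1', fProduct_eq_sum F hlow h2',
    ← Finset.sum_add_distrib]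
  exact Finset.sum_congr rfl fun m _ => by rw [Y_add_left, smul_add]

lemma fProduct_smul_left (F : VAData k V) (htr : Trunc F) {φ : ℤ → k} (hlow : LowVanish φ)
    (c : k) (a b : V) : fProduct F φ (c • a) b = c • fProduct F φ a b := by
  obtain ⟨N, h1⟩ := htr a b
  have h2 : ∀ m : ℤ, N ≤ m → F.Y (c • a) m b = 0 := fun m hm => by
    rw [Y_smul_left, h1 m hm, smul_zero]
  rw [fProduct_eq_sum F hlow h2, fProduct_eq_sum F hlow h1, Finset.smul_sum]
  exact Finset.sum_congr rfl fun m _ => by rw [Y_smul_left, smul_comm]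

lemma fProduct_add_right (F : VAData k V) (htr : Trunc F) {φ : ℤ → k} (hlow : LowVanish φ)
    (a b b' : V) : fProduct F φ a (b + b') = fProduct F φ a b + fProduct F φ a b' := by
  obtain ⟨N1, h1⟩ := htr a b
  obtain ⟨N2, h2⟩ := htr a b'
  have h1' : ∀ m : ℤ, max N1 N2 ≤ m → F.Y a m b = 0 :=
    fun m hm => h1 m (le_trans (le_max_left _ _) hm)
  have h2' : ∀ m : ℤ, max N1 N2 ≤ m → F.Y a m b' = 0 :=
    fun m hm => h2 m (le_trans (le_max_right _ _) hm)
  have h3' : ∀ m : ℤ, max N1 N2 ≤ m → F.Y a m (b + b') = 0 := fun m hm => by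
    rw [map_add, h1' m hm, h2' m hm, add_zero]
  rw [fProduct_eq_sum F hlow h3', fProduct_eq_sum F hlow h1', fProduct_eq_sum F hlow h2',
    ← Finset.sum_add_distrib]
  exact Finset.sum_congr rfl fun m _ => by rw [map_add, smul_add]

lemma fProduct_smul_right (F : VAData k V) (htr : Trunc F) {φ : ℤ → k} (hlow : LowVanish φ)
    (c : k) (a b : V) : fProduct F φ a (c • b) = c • fProduct F φ a b := by
  obtain ⟨N, h1⟩ := htr a b
  have h2 : ∀ m : ℤ, N ≤ m → F.Y a m (c • b) = 0 := fun m hm => by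
    rw [map_smul, h1 m hm, smul_zero]
  rw [fProduct_eq_sum F hlow h2, fProduct_eq_sum F hlow h1, Finset.smul_sum]
  exact Finset.sum_congr rfl fun m _ => by rw [map_smul, smul_comm]

end AuxProof


section AuxProof2

variable {k : Type*} [Field k] {V : Type*} [AddCommGroup V] [Module k V]

lemma span_piSingle_top (k G : Type*) [Field k] [Fintype G] [DecidableEq G] :
    Submodule.span k {t : G → k | ∃ a : G, t = Pi.single a 1} = ⊤ := by
  rw [eq_top_iff]
  rintro t -
  have ht : t = ∑ a : G, t a • (Pi.single a 1 : G → k) := by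
    conv_lhs => rw [← Finset.univ_sum_single t]
    refine Finset.sum_congr rfl fun a _ => ?_
    ext x
    by_cases hx : x = a <;> simp [Pi.single_apply, hx]
  rw [ht]
  exact Submodule.sum_mem _ fun a _ =>
    Submodule.smul_mem _ _ (Submodule.subset_span ⟨a, rfl⟩)

lemma span_maSingle_top (k G : Type*) [Field k] [Group G] :
    Submodule.span k {y : MonoidAlgebra k G | ∃ g : G, y = MonoidAlgebra.single g 1} = ⊤ := by
  rw [eq_top_iff]
  rintro y -
  induction y using MonoidAlgebra.induction_on with
  | of g => exact Submodule.subset_span ⟨g, by rw [MonoidAlgebra.of_apply]⟩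
  | add f g hf hg => exact Submodule.add_mem _ hf hg
  | smul c f hf => exact Submodule.smul_mem _ _ hf

lemma span_VG_top {G : Type*} [Group G] :
    Submodule.span k {x : V ⊗[k] MonoidAlgebra k G | ∃ (u : V) (g : G),
      x = u ⊗ₜ[k] MonoidAlgebra.single g (1 : k)} = ⊤ := by
  rw [eq_top_iff]
  rintro x -
  induction x using TensorProduct.induction_on with
  | zero => exact Submodule.zero_mem _
  | add x y hx hy => exact Submodule.add_mem _ hx hy
  | tmul u y =>
    induction y using MonoidAlgebra.induction_on with
    | of g => exact Submodule.subset_span ⟨u, g, by rw [MonoidAlgebra.of_apply]⟩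
    | add f g hf hg => rw [TensorProduct.tmul_add]; exact Submodule.add_mem _ hf hg
    | smul c f hf => rw [TensorProduct.tmul_smul]; exact Submodule.smul_mem _ _ hf

lemma span_WGens_top {G : Type*} [Group G] [Fintype G] [DecidableEq G] :
    Submodule.span k {w : (V ⊗[k] MonoidAlgebra k G) ⊗[k] (G → k) |
      ∃ (u : V) (g a : G),
        w = (u ⊗ₜ[k] MonoidAlgebra.single g (1 : k)) ⊗ₜ[k] Pi.single a (1 : k)} = ⊤ := by
  rw [eq_top_iff]
  rintro w -
  induction w using TensorProduct.induction_on with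
  | zero => exact Submodule.zero_mem _
  | add x y hx hy => exact Submodule.add_mem _ hx hy
  | tmul x t =>
    have hT : t ∈ Submodule.span k {t : G → k | ∃ a : G, t = Pi.single a 1} := by
      rw [span_piSingle_top]; exact Submodule.mem_top
    induction hT using Submodule.span_induction with
    | mem t ht =>
      obtain ⟨a, rfl⟩ := ht
      have hX : x ∈ Submodule.span k {x : V ⊗[k] MonoidAlgebra k G | ∃ (u : V) (g : G),
          x = u ⊗ₜ[k] MonoidAlgebra.single g (1 : k)} := by
        rw [span_VG_top]; exact Submodule.mem_top
      induction hX using Submodule.span_induction with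
      | mem x hx =>
        obtain ⟨u, g, rfl⟩ := hx
        exact Submodule.subset_span ⟨u, g, a, rfl⟩
      | zero => rw [TensorProduct.zero_tmul]; exact Submodule.zero_mem _
      | add y z _ _ py pz => rw [TensorProduct.add_tmul]; exact Submodule.add_mem _ py pz
      | smul c y _ py => rw [← TensorProduct.smul_tmul']; exact Submodule.smul_mem _ _ py
    | zero => rw [TensorProduct.tmul_zero]; exact Submodule.zero_mem _
    | add y z _ _ py pz => rw [TensorProduct.tmul_add]; exact Submodule.add_mem _ py pz
    | smul c y _ py => rw [TensorProduct.tmul_smul]; exact Submodule.smul_mem _ _ py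

lemma fProduct_smash {G : Type*} [Group G] [Fintype G] [DecidableEq G]
    (F : VAData k V) (htr : Trunc F) (ρ : G →* (V ≃ₗ[k] V))
    (FW : VAData k ((V ⊗[k] MonoidAlgebra k G) ⊗[k] (G → k)))
    (hYW : ∀ (u v : V) (g h a b : G) (m : ℤ),
      FW.Y ((u ⊗ₜ[k] MonoidAlgebra.single g (1 : k)) ⊗ₜ[k] Pi.single a (1 : k)) m
           ((v ⊗ₜ[k] MonoidAlgebra.single h (1 : k)) ⊗ₜ[k] Pi.single b (1 : k))
        = if a = h * b then
            ((F.Y u m (ρ g v) : V) ⊗ₜ[k] MonoidAlgebra.single (g * h) (1 : k))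
              ⊗ₜ[k] Pi.single b (1 : k)
          else 0)
    {φ : ℤ → k} (hlow : LowVanish φ) (u v : V) (g h a b : G) :
    fProduct FW φ ((u ⊗ₜ[k] MonoidAlgebra.single g (1 : k)) ⊗ₜ[k] Pi.single a (1 : k))
        ((v ⊗ₜ[k] MonoidAlgebra.single h (1 : k)) ⊗ₜ[k] Pi.single b (1 : k))
      = if a = h * b then
          ((fProduct F φ u (ρ g v)) ⊗ₜ[k] MonoidAlgebra.single (g * h) (1 : k))
            ⊗ₜ[k] Pi.single b (1 : k)
        else 0 := by
  by_cases hc : a = h * b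
  · rw [if_pos hc]
    obtain ⟨N, hN⟩ := htr u (ρ g v)
    have hsub1 : (Function.support fun m : ℤ =>
        φ m • FW.Y ((u ⊗ₜ[k] MonoidAlgebra.single g (1 : k)) ⊗ₜ[k] Pi.single a (1 : k)) m
          ((v ⊗ₜ[k] MonoidAlgebra.single h (1 : k)) ⊗ₜ[k] Pi.single b (1 : k)))
        ⊆ ↑(Finset.Icc (-2 : ℤ) N) := by
      intro m hm
      rw [Function.mem_support] at hm
      simp only [Finset.coe_Icc, Set.mem_Icc]
      constructor
      · by_contra hcon
        exact hm (by rw [hlow m (by omega), zero_smul])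
      · by_contra hcon
        refine hm ?_
        rw [hYW u v g h a b m, if_pos hc, hN m (by omega)]
        simp
    rw [fProduct, finsum_eq_sum_of_support_subset _ hsub1, fProduct,
      finsum_eq_sum_of_support_subset _ (support_subset_Icc F hlow hN),
      TensorProduct.sum_tmul, TensorProduct.sum_tmul]
    refine Finset.sum_congr rfl fun m _ => ?_
    rw [hYW u v g h a b m, if_pos hc, ← TensorProduct.smul_tmul', ← TensorProduct.smul_tmul']
  · rw [if_neg hc, fProduct]
    have hz : ∀ m : ℤ,
        φ m • FW.Y ((u ⊗ₜ[k] MonoidAlgebra.single g (1 : k)) ⊗ₜ[k] Pi.single a (1 : k)) m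
          ((v ⊗ₜ[k] MonoidAlgebra.single h (1 : k)) ⊗ₜ[k] Pi.single b (1 : k))
          = (0 : (V ⊗[k] MonoidAlgebra k G) ⊗[k] (G → k)) := fun m => by
      rw [hYW u v g h a b m, if_neg hc, smul_zero]
    rw [finsum_congr hz, finsum_zero]

/-- The entry extraction linear map. -/
def entryLM {n : ℕ} (i j : Fin n) : Matrix (Fin n) (Fin n) V →ₗ[k] V where
  toFun A := A i j
  map_add' _ _ := rfl
  map_smul' _ _ := rfl

/-- The single-entry matrix linear map. -/
def Emat {n : ℕ} (i j : Fin n) : V →ₗ[k] Matrix (Fin n) (Fin n) V where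
  toFun x := Matrix.of fun i' j' => if i' = i ∧ j' = j then x else 0
  map_add' x y := by
    ext i' j'
    simp only [Matrix.of_apply, Matrix.add_apply]
    split_ifs <;> simp
  map_smul' c x := by
    ext i' j'
    simp only [Matrix.of_apply, Matrix.smul_apply, RingHom.id_apply]
    split_ifs <;> simp

lemma Emat_apply {n : ℕ} (i j : Fin n) (x : V) (i' j' : Fin n) :
    Emat (k := k) i j x i' j' = if i' = i ∧ j' = j then x else 0 := rfl

lemma sum_Emat {n : ℕ} (A : Matrix (Fin n) (Fin n) V) :
    ∑ i : Fin n, ∑ j : Fin n, Emat (k := k) i j (A i j) = A := by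
  ext i' j'
  rw [Matrix.sum_apply]
  have h1 : ∀ i : Fin n, i ≠ i' →
      (∑ j : Fin n, Emat (k := k) i j (A i j)) i' j' = 0 := by
    intro i hi
    rw [Matrix.sum_apply]
    exact Finset.sum_eq_zero fun j _ => by
      rw [Emat_apply, if_neg (by tauto)]
  rw [Finset.sum_eq_single i' (fun i _ hi => h1 i hi)
    (fun h => absurd (Finset.mem_univ _) h), Matrix.sum_apply,
    Finset.sum_eq_single j' (fun j _ hj => by rw [Emat_apply, if_neg (by tauto)])
    (fun h => absurd (Finset.mem_univ _) h), Emat_apply, if_pos ⟨rfl, rfl⟩]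

lemma fProduct_matrix {n : ℕ} (F : VAData k V) (htr : Trunc F)
    (FM : VAData k (Matrix (Fin n) (Fin n) V)) (htrM : Trunc FM)
    (hYM : ∀ (A B : Matrix (Fin n) (Fin n) V) (m : ℤ) (i j : Fin n),
      FM.Y A m B i j = ∑ l : Fin n, F.Y (A i l) m (B l j))
    {φ : ℤ → k} (hlow : LowVanish φ) (A B : Matrix (Fin n) (Fin n) V) (i j : Fin n) :
    (fProduct FM φ A B) i j = ∑ l : Fin n, fProduct F φ (A i l) (B l j) := by
  obtain ⟨N0, hN0⟩ := htrM A B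
  choose Nf hNf using fun l : Fin n => htr (A i l) (B l j)
  set N : ℤ := max N0 (Finset.univ.sup' ⟨i, Finset.mem_univ i⟩ Nf) with hNdef
  have hNa : ∀ m : ℤ, N ≤ m → FM.Y A m B = 0 :=
    fun m hm => hN0 m (le_trans (le_max_left _ _) hm)
  have hNl : ∀ l : Fin n, ∀ m : ℤ, N ≤ m → F.Y (A i l) m (B l j) = 0 := fun l m hm =>
    hNf l m (le_trans (le_trans (Finset.le_sup' Nf (Finset.mem_univ l))
      (le_max_right _ _)) hm)
  rw [fProduct_eq_sum FM hlow hNa]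
  have hent : (∑ m ∈ Finset.Icc (-2 : ℤ) N, φ m • FM.Y A m B) i j
      = ∑ m ∈ Finset.Icc (-2 : ℤ) N, ∑ l : Fin n, φ m • F.Y (A i l) m (B l j) := by
    rw [Matrix.sum_apply]
    exact Finset.sum_congr rfl fun m _ => by
      rw [Matrix.smul_apply, hYM A B m i j, Finset.smul_sum]
  rw [hent, Finset.sum_comm]
  exact Finset.sum_congr rfl fun l _ => (fProduct_eq_sum F hlow (hNl l)).symm

lemma Emat_fProduct {n : ℕ} (F : VAData k V) (htr : Trunc F)
    (FM : VAData k (Matrix (Fin n) (Fin n) V)) (htrM : Trunc FM)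
    (hYM : ∀ (A B : Matrix (Fin n) (Fin n) V) (m : ℤ) (i j : Fin n),
      FM.Y A m B i j = ∑ l : Fin n, F.Y (A i l) m (B l j))
    {φ : ℤ → k} (hlow : LowVanish φ) (i j : Fin n) (u v : V) :
    Emat (k := k) i j (fProduct F φ u v)
      = fProduct FM φ (Emat (k := k) i i u) (Emat (k := k) i j v) := by
  ext i' j'
  rw [fProduct_matrix F htr FM htrM hYM hlow _ _ i' j', Emat_apply]
  rw [Finset.sum_eq_single i (fun l _ hl => by
      rw [show Emat (k := k) i i u i' l = 0 from by
          rw [Emat_apply]; exact if_neg (fun hc => hl hc.2), fProduct_zero_left])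
    (fun h => absurd (Finset.mem_univ _) h),
    Emat_apply i i u i' i, Emat_apply i j v i j']
  by_cases h1 : i' = i
  · by_cases h2 : j' = j
    · rw [if_pos ⟨h1, h2⟩, if_pos ⟨h1, rfl⟩, if_pos ⟨rfl, h2⟩]
    · rw [if_neg (show ¬(i' = i ∧ j' = j) from fun hc => h2 hc.2),
        if_pos (show i' = i ∧ i = i from ⟨h1, rfl⟩),
        if_neg (show ¬(i = i ∧ j' = j) from fun hc => h2 hc.2), fProduct_zero_right]
  · rw [if_neg (show ¬(i' = i ∧ j' = j) from fun hc => h1 hc.1),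
      if_neg (show ¬(i' = i ∧ i = i) from fun hc => h1 hc.1), fProduct_zero_left]

lemma Emat_mem {n : ℕ} (F : VAData k V) (htr : Trunc F)
    (FM : VAData k (Matrix (Fin n) (Fin n) V)) (htrM : Trunc FM)
    (hYM : ∀ (A B : Matrix (Fin n) (Fin n) V) (m : ℤ) (i j : Fin n),
      FM.Y A m B i j = ∑ l : Fin n, F.Y (A i l) m (B l j))
    (f : ℤ → k) (hlow : LowVanish (derivCoef f)) (i j : Fin n) (x : V)
    (hx : x ∈ gSpan F f) : Emat (k := k) i j x ∈ gSpan FM f := by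
  induction hx using Submodule.span_induction with
  | mem x hx =>
    obtain ⟨u, v, rfl⟩ := hx
    rw [Emat_fProduct F htr FM htrM hYM hlow i j u v]
    exact Submodule.subset_span ⟨_, _, rfl⟩
  | zero => rw [map_zero]; exact Submodule.zero_mem _
  | add a b _ _ pa pb => rw [map_add]; exact Submodule.add_mem _ pa pb
  | smul c a _ pa => rw [map_smul]; exact Submodule.smul_mem _ _ pa

lemma smul_Emat_one {n : ℕ} {Q : Type*} [AddCommGroup Q] [Module k Q]
    (i j : Fin n) (y : Q) :
    (Matrix.of fun i' j' => (Emat (k := k) i j (1 : k)) i' j' • y) = Emat (k := k) i j y := by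
  ext i' j'
  simp only [Matrix.of_apply, Emat_apply]
  split_ifs <;> simp

end AuxProof2


section AuxProof3

variable {k : Type*} [Field k] {Q : Type*} [AddCommGroup Q] [Module k Q]

/-- The bilinear map underlying `matFwd`. -/
def matFwdAux (k Q : Type*) [Field k] [AddCommGroup Q] [Module k Q] {n : ℕ} :
    Q →ₗ[k] Matrix (Fin n) (Fin n) k →ₗ[k] Matrix (Fin n) (Fin n) Q where
  toFun y :=
    { toFun := fun X => Matrix.of fun i j => X i j • y
      map_add' := fun X X' => by
        ext i j
        simp [Matrix.add_apply, add_smul]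
      map_smul' := fun c X => by
        ext i j
        simp [Matrix.smul_apply, smul_eq_mul, mul_smul] }
  map_add' y y' := by
    refine LinearMap.ext fun X => ?_
    ext i j
    simp [Matrix.add_apply, smul_add]
  map_smul' c y := by
    refine LinearMap.ext fun X => ?_
    ext i j
    simp only [LinearMap.coe_mk, AddHom.coe_mk, Matrix.of_apply, RingHom.id_apply,
      LinearMap.smul_apply, Matrix.smul_apply]
    rw [smul_comm]

/-- `Q ⊗ M(n,k) → M(n,Q)`. -/
noncomputable def matFwd (k Q : Type*) [Field k] [AddCommGroup Q] [Module k Q] {n : ℕ} :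
    Q ⊗[k] Matrix (Fin n) (Fin n) k →ₗ[k] Matrix (Fin n) (Fin n) Q :=
  TensorProduct.lift (matFwdAux k Q)

lemma matFwd_tmul {n : ℕ} (y : Q) (X : Matrix (Fin n) (Fin n) k) :
    matFwd k Q (y ⊗ₜ[k] X) = Matrix.of fun i j => X i j • y := rfl

/-- `M(n,Q) → Q ⊗ M(n,k)`. -/
noncomputable def matBwd (k Q : Type*) [Field k] [AddCommGroup Q] [Module k Q] {n : ℕ} :
    Matrix (Fin n) (Fin n) Q →ₗ[k] Q ⊗[k] Matrix (Fin n) (Fin n) k :=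
  ∑ i : Fin n, ∑ j : Fin n,
    ((TensorProduct.mk k Q (Matrix (Fin n) (Fin n) k)).flip
      (Emat (k := k) i j (1 : k))).comp (entryLM (k := k) i j)

lemma matBwd_apply {n : ℕ} (M : Matrix (Fin n) (Fin n) Q) :
    matBwd k Q M = ∑ i : Fin n, ∑ j : Fin n, (M i j) ⊗ₜ[k] Emat (k := k) i j (1 : k) := by
  rw [matBwd, LinearMap.sum_apply]
  refine Finset.sum_congr rfl fun i _ => ?_
  rw [LinearMap.sum_apply]
  exact Finset.sum_congr rfl fun j _ => rfl

lemma matFwd_matBwd {n : ℕ} (M : Matrix (Fin n) (Fin n) Q) :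
    matFwd k Q (matBwd k Q M) = M := by
  rw [matBwd_apply, map_sum]
  calc ∑ i : Fin n, matFwd k Q (∑ j : Fin n, M i j ⊗ₜ[k] Emat (k := k) i j (1 : k))
      = ∑ i : Fin n, ∑ j : Fin n, matFwd k Q (M i j ⊗ₜ[k] Emat (k := k) i j (1 : k)) :=
        Finset.sum_congr rfl fun i _ => map_sum _ _ _
    _ = ∑ i : Fin n, ∑ j : Fin n, Emat (k := k) i j (M i j) :=
        Finset.sum_congr rfl fun i _ => Finset.sum_congr rfl fun j _ => by
          rw [matFwd_tmul, smul_Emat_one]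
    _ = M := sum_Emat M

lemma matBwd_matFwd {n : ℕ} (z : Q ⊗[k] Matrix (Fin n) (Fin n) k) :
    matBwd k Q (matFwd k Q z) = z := by
  induction z using TensorProduct.induction_on with
  | zero => rw [map_zero, map_zero]
  | add z1 z2 p1 p2 => rw [map_add, map_add, p1, p2]
  | tmul y X =>
    rw [matFwd_tmul, matBwd_apply]
    calc ∑ i : Fin n, ∑ j : Fin n,
          (Matrix.of fun i' j' => X i' j' • y) i j ⊗ₜ[k] Emat (k := k) i j (1 : k)
        = ∑ i : Fin n, ∑ j : Fin n, y ⊗ₜ[k] (X i j • Emat (k := k) i j (1 : k)) :=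
          Finset.sum_congr rfl fun i _ => Finset.sum_congr rfl fun j _ => by
            rw [Matrix.of_apply, TensorProduct.smul_tmul]
      _ = y ⊗ₜ[k] (∑ i : Fin n, ∑ j : Fin n, X i j • Emat (k := k) i j (1 : k)) := by
          rw [TensorProduct.tmul_sum]
          exact Finset.sum_congr rfl fun i _ => (TensorProduct.tmul_sum _ _ _).symm
      _ = y ⊗ₜ[k] X := by
          congr 1
          calc ∑ i : Fin n, ∑ j : Fin n, X i j • Emat (k := k) i j (1 : k)
              = ∑ i : Fin n, ∑ j : Fin n, Emat (k := k) i j (X i j) :=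
                Finset.sum_congr rfl fun i _ => Finset.sum_congr rfl fun j _ => by
                  rw [← map_smul, smul_eq_mul, mul_one]
            _ = X := sum_Emat X

end AuxProof3


set_option maxHeartbeats 2000000 in
set_option synthInstance.maxHeartbeats 400000 in
/-- Let `V` be an `H`-module vertex algebra, `H = kG` for a finite
subgroup `G` of `Aut(V)` (a faithful action `ρ` by vertex algebra automorphisms),
`H* = (G → k)` the dual Hopf algebra, and `f` admissible with `g = ∂_z f`.  Then for
each `n ∈ ℤ≥0`:
(i) `A(V#H#H*) ≅ A(V)#H#H*` as associative algebras (expressed by a surjective linear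
map `θ` with kernel `(V#H#H*)_(g)(V#H#H*)` intertwining the products, which induces
the isomorphism on the quotient);
(ii) `A(M(n,V)) ≅ A(V) ⊗ M(n,k) ≅ M(n,A(V))` as associative algebras. -/
theorem statement18 {k : Type*} [Field k] [CharZero k]
    {V : Type*} [AddCommGroup V] [Module k V]
    {G : Type*} [Group G] [Fintype G] [DecidableEq G]
    (F : VAData k V) (hF : F.IsVertexAlgebra)
    (ρ : G →* (V ≃ₗ[k] V)) (hinj : Function.Injective ρ)
    (haut : ∀ g : G, IsVAAut F (ρ g))
    (f : ℤ → k) (hf : AdmissibleF f) (n : ℕ) :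
    -- (i) A(V#H#H*) ≅ A(V)#H#H*
    (∀ FW : VAData k ((V ⊗[k] MonoidAlgebra k G) ⊗[k] (G → k)),
      (∀ (u v : V) (g h a b : G) (m : ℤ),
        FW.Y ((u ⊗ₜ[k] MonoidAlgebra.single g (1 : k)) ⊗ₜ[k] Pi.single a (1 : k)) m
             ((v ⊗ₜ[k] MonoidAlgebra.single h (1 : k)) ⊗ₜ[k] Pi.single b (1 : k))
          = if a = h * b then
              ((F.Y u m (ρ g v) : V) ⊗ₜ[k] MonoidAlgebra.single (g * h) (1 : k))
                ⊗ₜ[k] Pi.single b (1 : k)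
            else 0) →
      FW.IsSLocalVA →
      ∃ θ : ((V ⊗[k] MonoidAlgebra k G) ⊗[k] (G → k)) →ₗ[k]
              (((V ⧸ gSpan F f) ⊗[k] MonoidAlgebra k G) ⊗[k] (G → k)),
        Function.Surjective θ ∧
        LinearMap.ker θ = gSpan FW f ∧
        (∀ (u : V) (g a : G),
          θ ((u ⊗ₜ[k] MonoidAlgebra.single g (1 : k)) ⊗ₜ[k] Pi.single a (1 : k))
            = ((Submodule.Quotient.mk u : V ⧸ gSpan F f)
                ⊗ₜ[k] MonoidAlgebra.single g (1 : k)) ⊗ₜ[k] Pi.single a (1 : k)) ∧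
        (∀ (u v : V) (g h a b : G),
          θ (fProduct FW f
              ((u ⊗ₜ[k] MonoidAlgebra.single g (1 : k)) ⊗ₜ[k] Pi.single a (1 : k))
              ((v ⊗ₜ[k] MonoidAlgebra.single h (1 : k)) ⊗ₜ[k] Pi.single b (1 : k)))
            = if a = h * b then
                ((Submodule.Quotient.mk (fProduct F f u (ρ g v)) : V ⧸ gSpan F f)
                    ⊗ₜ[k] MonoidAlgebra.single (g * h) (1 : k))
                  ⊗ₜ[k] Pi.single b (1 : k)
              else 0)) ∧
    -- (ii) A(M(n,V)) ≅ A(V) ⊗ M(n,k) ≅ M(n,A(V))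
    (∀ FM : VAData k (Matrix (Fin n) (Fin n) V),
      (∀ (A B : Matrix (Fin n) (Fin n) V) (m : ℤ) (i j : Fin n),
        FM.Y A m B i j = ∑ l : Fin n, F.Y (A i l) m (B l j)) →
      FM.IsSLocalVA →
      (∃ e1 : (Matrix (Fin n) (Fin n) V ⧸ gSpan FM f) ≃ₗ[k]
                Matrix (Fin n) (Fin n) (V ⧸ gSpan F f),
        (∀ A : Matrix (Fin n) (Fin n) V,
          e1 (Submodule.Quotient.mk A)
            = Matrix.of fun i j => (Submodule.Quotient.mk (A i j) : V ⧸ gSpan F f)) ∧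
        (∀ A B : Matrix (Fin n) (Fin n) V,
          e1 (Submodule.Quotient.mk (fProduct FM f A B))
            = Matrix.of fun i j =>
                (Submodule.Quotient.mk (∑ l : Fin n, fProduct F f (A i l) (B l j))
                  : V ⧸ gSpan F f))) ∧
      (∃ e2 : ((V ⧸ gSpan F f) ⊗[k] Matrix (Fin n) (Fin n) k) ≃ₗ[k]
                Matrix (Fin n) (Fin n) (V ⧸ gSpan F f),
        ∀ (v : V) (X : Matrix (Fin n) (Fin n) k),
          e2 ((Submodule.Quotient.mk v : V ⧸ gSpan F f) ⊗ₜ[k] X)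
            = Matrix.of fun i j => X i j • (Submodule.Quotient.mk v : V ⧸ gSpan F f))) := by
  have hlowf : LowVanish f := admissible_lowVanish hf
  have hlowg : LowVanish (derivCoef f) := admissible_lowVanish_deriv hf
  have htrF : Trunc F := hF.1.1.1
  constructor
  · -- part (i)
    intro FW hYW hSW
    have htrW : Trunc FW := hSW.1.1.1
    refine ⟨LinearMap.rTensor (G → k)
      (LinearMap.rTensor (MonoidAlgebra k G) (gSpan F f).mkQ), ?_, ?_, ?_, ?_⟩
    · exact LinearMap.rTensor_surjective _
        (LinearMap.rTensor_surjective _ (Submodule.mkQ_surjective _))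
    · -- kernel identification
      apply le_antisymm
      · -- ker ≤ gSpan FW f
        have claimC : ∀ s : V, s ∈ gSpan F f → ∀ (yG : MonoidAlgebra k G) (t : G → k),
            ((s ⊗ₜ[k] yG) ⊗ₜ[k] t) ∈ gSpan FW f := by
          intro s hs
          induction hs using Submodule.span_induction with
          | mem s hsmem =>
            obtain ⟨u, v, rfl⟩ := hsmem
            intro yG t
            have hT : t ∈ Submodule.span k {t : G → k | ∃ a : G, t = Pi.single a 1} := by
              rw [span_piSingle_top]; exact Submodule.mem_top
            induction hT using Submodule.span_induction with
            | mem t htm =>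
              obtain ⟨a, rfl⟩ := htm
              have hY : yG ∈ Submodule.span k
                  {y : MonoidAlgebra k G | ∃ g : G, y = MonoidAlgebra.single g 1} := by
                rw [span_maSingle_top]; exact Submodule.mem_top
              induction hY using Submodule.span_induction with
              | mem yG hym =>
                obtain ⟨g, rfl⟩ := hym
                have key := fProduct_smash F htrF ρ FW hYW hlowg u v 1 g (g * a) a
                rw [if_pos rfl, map_one] at key
                simp only [one_mul, LinearEquiv.coe_one, id_eq] at key
                rw [← key]
                exact Submodule.subset_span ⟨_, _, rfl⟩
              | zero =>
                rw [TensorProduct.tmul_zero, TensorProduct.zero_tmul]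
                exact Submodule.zero_mem _
              | add y1 y2 _ _ p1 p2 =>
                rw [TensorProduct.tmul_add, TensorProduct.add_tmul]
                exact Submodule.add_mem _ p1 p2
              | smul c y1 _ p1 =>
                rw [TensorProduct.tmul_smul, ← TensorProduct.smul_tmul']
                exact Submodule.smul_mem _ _ p1
            | zero => rw [TensorProduct.tmul_zero]; exact Submodule.zero_mem _
            | add t1 t2 _ _ p1 p2 =>
              rw [TensorProduct.tmul_add]; exact Submodule.add_mem _ p1 p2
            | smul c t1 _ p1 =>
              rw [TensorProduct.tmul_smul]; exact Submodule.smul_mem _ _ p1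
          | zero =>
            intro yG t
            rw [TensorProduct.zero_tmul, TensorProduct.zero_tmul]
            exact Submodule.zero_mem _
          | add s1 s2 _ _ p1 p2 =>
            intro yG t
            rw [TensorProduct.add_tmul, TensorProduct.add_tmul]
            exact Submodule.add_mem _ (p1 yG t) (p2 yG t)
          | smul c s1 _ p1 =>
            intro yG t
            rw [← TensorProduct.smul_tmul', ← TensorProduct.smul_tmul']
            exact Submodule.smul_mem _ _ (p1 yG t)
        have claimD : ∀ y2 : (gSpan F f) ⊗[k] MonoidAlgebra k G, ∀ t : G → k,
            (LinearMap.rTensor (MonoidAlgebra k G) (gSpan F f).subtype y2) ⊗ₜ[k] t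
              ∈ gSpan FW f := by
          intro y2 t
          induction y2 using TensorProduct.induction_on with
          | zero => rw [map_zero, TensorProduct.zero_tmul]; exact Submodule.zero_mem _
          | add w1 w2 q1 q2 =>
            rw [map_add, TensorProduct.add_tmul]; exact Submodule.add_mem _ q1 q2
          | tmul s yG =>
            rw [LinearMap.rTensor_tmul, Submodule.subtype_apply]
            exact claimC s s.2 yG t
        intro x hx
        have hexact : LinearMap.ker (LinearMap.rTensor (G → k)
              (LinearMap.rTensor (MonoidAlgebra k G) (gSpan F f).mkQ))
            = LinearMap.range (LinearMap.rTensor (G → k)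
              (LinearMap.ker
                (LinearMap.rTensor (MonoidAlgebra k G) (gSpan F f).mkQ)).subtype) :=
          (rTensor_exact (G → k) (LinearMap.exact_subtype_ker_map _)
            (LinearMap.rTensor_surjective _ (Submodule.mkQ_surjective _))).linearMap_ker_eq
        rw [hexact] at hx
        obtain ⟨y, rfl⟩ := hx
        induction y using TensorProduct.induction_on with
        | zero => rw [map_zero]; exact Submodule.zero_mem _
        | add y1 y2 p1 p2 => rw [map_add]; exact Submodule.add_mem _ p1 p2
        | tmul z t =>
          rw [LinearMap.rTensor_tmul, Submodule.subtype_apply]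
          have hz : (z : V ⊗[k] MonoidAlgebra k G) ∈ LinearMap.range
              (LinearMap.rTensor (MonoidAlgebra k G) (gSpan F f).subtype) := by
            rw [← rTensor_mkQ (MonoidAlgebra k G) (gSpan F f)]
            exact z.2
          rw [LinearMap.mem_range] at hz
          obtain ⟨y2, hy2⟩ := hz
          rw [← hy2]
          exact claimD y2 t
      · -- gSpan FW f ≤ ker
        refine Submodule.span_le.mpr ?_
        rintro x ⟨X, Y, rfl⟩
        rw [SetLike.mem_coe, LinearMap.mem_ker]
        have hX : X ∈ Submodule.span k {w : (V ⊗[k] MonoidAlgebra k G) ⊗[k] (G → k) |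
            ∃ (u : V) (g a : G),
              w = (u ⊗ₜ[k] MonoidAlgebra.single g (1 : k)) ⊗ₜ[k] Pi.single a (1 : k)} := by
          rw [span_WGens_top]; exact Submodule.mem_top
        induction hX using Submodule.span_induction with
        | mem X hXm =>
          have hY : Y ∈ Submodule.span k {w : (V ⊗[k] MonoidAlgebra k G) ⊗[k] (G → k) |
              ∃ (u : V) (g a : G),
                w = (u ⊗ₜ[k] MonoidAlgebra.single g (1 : k)) ⊗ₜ[k] Pi.single a (1 : k)} := by
            rw [span_WGens_top]; exact Submodule.mem_top
          induction hY using Submodule.span_induction with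
          | mem Y hYm =>
            obtain ⟨u, g, a, rfl⟩ := hXm
            obtain ⟨v, h, b, rfl⟩ := hYm
            rw [fProduct_smash F htrF ρ FW hYW hlowg u v g h a b]
            by_cases hc : a = h * b
            · rw [if_pos hc, LinearMap.rTensor_tmul, LinearMap.rTensor_tmul,
                Submodule.mkQ_apply,
                (Submodule.Quotient.mk_eq_zero (gSpan F f)).mpr
                  (Submodule.subset_span
                    (show fProduct F (derivCoef f) u ((ρ g) v) ∈
                        {x : V | ∃ a b : V, x = fProduct F (derivCoef f) a b} from
                      ⟨u, (ρ g) v, rfl⟩)),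
                TensorProduct.zero_tmul, TensorProduct.zero_tmul]
            · rw [if_neg hc, map_zero]
          | zero => rw [fProduct_zero_right, map_zero]
          | add Y1 Y2 _ _ p1 p2 =>
            rw [fProduct_add_right FW htrW hlowg, map_add, p1, p2, add_zero]
          | smul c Y1 _ p1 =>
            rw [fProduct_smul_right FW htrW hlowg, map_smul, p1, smul_zero]
        | zero => rw [fProduct_zero_left, map_zero]
        | add X1 X2 _ _ p1 p2 =>
          rw [fProduct_add_left FW htrW hlowg, map_add, p1, p2, add_zero]
        | smul c X1 _ p1 =>
          rw [fProduct_smul_left FW htrW hlowg, map_smul, p1, smul_zero]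
    · -- θ on simple tensors
      intro u g a
      rw [LinearMap.rTensor_tmul, LinearMap.rTensor_tmul, Submodule.mkQ_apply]
    · -- θ of f-products of simple tensors
      intro u v g h a b
      rw [fProduct_smash F htrF ρ FW hYW hlowf u v g h a b]
      by_cases hc : a = h * b
      · rw [if_pos hc, if_pos hc, LinearMap.rTensor_tmul, LinearMap.rTensor_tmul,
          Submodule.mkQ_apply]
      · rw [if_neg hc, if_neg hc, map_zero]
  · -- part (ii)
    intro FM hYM hSM
    have htrM : Trunc FM := hSM.1.1.1
    constructor
    · -- e1
      set Φ : Matrix (Fin n) (Fin n) V →ₗ[k] Matrix (Fin n) (Fin n) (V ⧸ gSpan F f) :=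
        { toFun := fun A => Matrix.of fun i j => Submodule.Quotient.mk (A i j)
          map_add' := fun A B => by
            ext i j
            simp [Matrix.add_apply]
          map_smul' := fun c A => by
            ext i j
            simp [Matrix.smul_apply] } with hΦdef
      have hΦapp : ∀ (A : Matrix (Fin n) (Fin n) V) (i j : Fin n),
          Φ A i j = Submodule.Quotient.mk (A i j) := fun A i j => rfl
      have hΦfP : ∀ A B : Matrix (Fin n) (Fin n) V,
          Φ (fProduct FM (derivCoef f) A B) = 0 := by
        intro A B
        ext i j
        rw [hΦapp, fProduct_matrix F htrF FM htrM hYM hlowg A B i j, Matrix.zero_apply,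
          Submodule.Quotient.mk_eq_zero]
        exact Submodule.sum_mem _ fun l _ => Submodule.subset_span ⟨_, _, rfl⟩
      have hle : gSpan FM f ≤ LinearMap.ker Φ := by
        refine Submodule.span_le.mpr ?_
        rintro x ⟨A, B, rfl⟩
        rw [SetLike.mem_coe, LinearMap.mem_ker]
        exact hΦfP A B
      have hkerle : LinearMap.ker Φ ≤ gSpan FM f := by
        intro A hA
        rw [LinearMap.mem_ker] at hA
        have hentry : ∀ i j : Fin n, A i j ∈ gSpan F f := by
          intro i j
          rw [← Submodule.Quotient.mk_eq_zero, ← hΦapp A i j, hA, Matrix.zero_apply]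
        rw [← sum_Emat (k := k) A]
        exact Submodule.sum_mem _ fun i _ => Submodule.sum_mem _ fun j _ =>
          Emat_mem F htrF FM htrM hYM f hlowg i j _ (hentry i j)
      refine ⟨LinearEquiv.ofBijective (Submodule.liftQ _ Φ hle) ⟨?_, ?_⟩, ?_, ?_⟩
      · rw [← LinearMap.ker_eq_bot]
        exact Submodule.ker_liftQ_eq_bot _ _ _ hkerle
      · intro M
        choose A hA using fun i j => Submodule.Quotient.mk_surjective (gSpan F f) (M i j)
        refine ⟨Submodule.Quotient.mk (Matrix.of fun i j => A i j), ?_⟩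
        rw [Submodule.liftQ_apply]
        ext i j
        rw [hΦapp]
        exact hA i j
      · intro A
        change Submodule.liftQ _ Φ hle (Submodule.Quotient.mk A) = _
        rw [Submodule.liftQ_apply]
        rfl
      · intro A B
        change Submodule.liftQ _ Φ hle (Submodule.Quotient.mk (fProduct FM f A B)) = _
        rw [Submodule.liftQ_apply]
        ext i j
        rw [hΦapp, fProduct_matrix F htrF FM htrM hYM hlowf A B i j, Matrix.of_apply]
    · -- e2
      refine ⟨LinearEquiv.ofLinear (matFwd k (V ⧸ gSpan F f)) (matBwd k (V ⧸ gSpan F f))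
        (LinearMap.ext fun M => matFwd_matBwd M)
        (LinearMap.ext fun z => matBwd_matFwd z), ?_⟩
      intro v X
      rw [LinearEquiv.ofLinear_apply]
      rfl


end HopfVA
end

section
/- Let H be a Hopf algebra and (V, Y, 1, s, Q) an H-module quantum vertex algebra over k[[h]]. Define Y^{V#H}(u#a,z)(v#b) = Σ Y(u,z)(a_1 v) # a_2 b on V#H = V⊗H. Suppose there is a braiding Q^{V#H} on V#H of the form Q^{V#H}((u#a)⊗(v#b)) = (u#a)⊗(v#b)⊗F_h(u#a,v#b) with F_h(u#a,v#b) ∈ k((z))[[h]], such that whenever Q(u⊗a_1 v) = u⊗a_1 v⊗G_h(u,a_1 v), one has F_h(u#a,v#b) = G_h(u,a_1 v) for all terms a_1 of Δ(a) = Σ a_1⊗a_2. Then (V#H, Y^{V#H}, 1#1, s#1, Q^{V#H}) is an S-local quantum vertex algebra: it satisfies the weak associativity relation and the QS-locality identity modulo every power h^M. -/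
open scoped TensorProduct DirectSum

namespace HopfVA

section Aux

variable {R : Type*} [CommRing R] {V : Type*} [AddCommGroup V] [Module R V]
variable {W : Type*} [AddCommGroup W] [Module R W]

namespace ModH

variable {r : R} {M : ℕ}

theorem refl (x : V) : ModH r M x x := ⟨0, by simp⟩

theorem add {x y x' y' : V} (h : ModH r M x y) (h' : ModH r M x' y') :
    ModH r M (x + x') (y + y') := by
  obtain ⟨v, hv⟩ := h; obtain ⟨v', hv'⟩ := h'
  exact ⟨v + v', by rw [smul_add, ← hv, ← hv']; abel⟩

theorem symm {x y : V} (h : ModH r M x y) : ModH r M y x := by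
  obtain ⟨v, hv⟩ := h
  exact ⟨-v, by rw [smul_neg, ← hv]; abel⟩

theorem trans {x y z : V} (h : ModH r M x y) (h' : ModH r M y z) : ModH r M x z := by
  obtain ⟨v, hv⟩ := h; obtain ⟨v', hv'⟩ := h'
  exact ⟨v + v', by rw [smul_add, ← hv, ← hv']; abel⟩

theorem map {x y : V} (φ : V →ₗ[R] W) (h : ModH r M x y) : ModH r M (φ x) (φ y) := by
  obtain ⟨v, hv⟩ := h
  exact ⟨φ v, by rw [← map_sub, hv, map_smul]⟩

theorem zsmul {x y : V} (c : ℤ) (h : ModH r M x y) : ModH r M (c • x) (c • y) := by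
  obtain ⟨v, hv⟩ := h
  exact ⟨c • v, by rw [← smul_sub, hv, smul_comm]⟩

theorem rsmul {x y : V} (c : R) (h : ModH r M x y) : ModH r M (c • x) (c • y) := by
  obtain ⟨v, hv⟩ := h
  exact ⟨c • v, by rw [← smul_sub, hv, smul_comm]⟩

theorem sum {ι : Type*} (s : Finset ι) (f g : ι → V)
    (h : ∀ i ∈ s, ModH r M (f i) (g i)) :
    ModH r M (∑ i ∈ s, f i) (∑ i ∈ s, g i) := by
  classical
  induction s using Finset.induction_on with
  | empty => simpa using refl 0
  | insert _ _ hx ih =>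
    rw [Finset.sum_insert hx, Finset.sum_insert hx]
    exact add (h _ (Finset.mem_insert_self _ _)) (ih fun i hi => h i (Finset.mem_insert_of_mem hi))

theorem of_eq {x y : V} (h : x = y) : ModH r M x y := h ▸ refl x

end ModH

end Aux
section ZW

variable {R : Type*} [CommRing R] {V : Type*} [AddCommGroup V] [Module R V]
variable {W : Type*} [AddCommGroup W] [Module R W]

theorem zwMul_zero_exp (f : ℤ → ℤ → V) (p q : ℤ) : zwMul 0 f p q = f p q := by
  simp [zwMul]

theorem zwMul_succ (n : ℕ) (f : ℤ → ℤ → V) (p q : ℤ) :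
    zwMul (n + 1) f p q = zwMul n f (p - 1) q - zwMul n f p (q - 1) := by
  set A : ℕ → V := fun i =>
    ((-1 : ℤ) ^ i * (n.choose i : ℤ)) • f (p - 1 - ((n : ℤ) - (i : ℤ))) (q - (i : ℤ)) with hA
  set B : ℕ → V := fun i =>
    ((-1 : ℤ) ^ i * (n.choose i : ℤ)) • f (p - ((n : ℤ) - (i : ℤ))) (q - 1 - (i : ℤ)) with hB
  have hzA : zwMul n f (p - 1) q = ∑ i ∈ Finset.range (n + 1), A i := rfl
  have hzB : zwMul n f p (q - 1) = ∑ i ∈ Finset.range (n + 1), B i := rfl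
  rw [zwMul, hzA, hzB, Finset.sum_range_succ']
  have hsplit : ∀ i ∈ Finset.range (n + 1),
      ((-1 : ℤ) ^ (i + 1) * (((n + 1).choose (i + 1) : ℕ) : ℤ)) •
        f (p - (((n + 1 : ℕ) : ℤ) - ((i + 1 : ℕ) : ℤ))) (q - ((i + 1 : ℕ) : ℤ))
      = A (i + 1) - B i := by
    intro i _
    have hc : (((n + 1).choose (i + 1) : ℕ) : ℤ) = (n.choose (i + 1) : ℤ) + (n.choose i : ℤ) := by
      rw [Nat.choose_succ_succ']; push_cast; ring
    have harg1 : p - (((n + 1 : ℕ) : ℤ) - ((i + 1 : ℕ) : ℤ)) = p - 1 - ((n : ℤ) - ((i + 1 : ℕ) : ℤ)) := by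
      push_cast; ring
    have harg2 : p - (((n + 1 : ℕ) : ℤ) - ((i + 1 : ℕ) : ℤ)) = p - ((n : ℤ) - (i : ℤ)) := by
      push_cast; ring
    have harg3 : q - ((i + 1 : ℕ) : ℤ) = q - 1 - (i : ℤ) := by push_cast; ring
    have key1 : ((-1 : ℤ) ^ (i + 1) * (n.choose (i + 1) : ℤ)) •
        f (p - (((n + 1 : ℕ) : ℤ) - ((i + 1 : ℕ) : ℤ))) (q - ((i + 1 : ℕ) : ℤ))
        = A (i + 1) := by
      rw [hA]; simp only []
      rw [harg1]
    have key2 : ((-1 : ℤ) ^ (i + 1) * (n.choose i : ℤ)) •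
        f (p - (((n + 1 : ℕ) : ℤ) - ((i + 1 : ℕ) : ℤ))) (q - ((i + 1 : ℕ) : ℤ))
        = -(B i) := by
      rw [hB]; simp only []
      rw [harg2, harg3, ← neg_smul]
      congr 1
      ring
    rw [hc, mul_add, add_smul, key1, key2, sub_eq_add_neg]
  rw [Finset.sum_congr rfl hsplit, Finset.sum_sub_distrib]
  have hAlast : ∑ i ∈ Finset.range (n + 1), A (i + 1)
      = ∑ i ∈ Finset.range (n + 1), A i - A 0 := by
    rw [Finset.sum_range_succ]
    have : A (n + 1) = 0 := by
      simp [hA, Nat.choose_succ_self]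
    rw [this, add_zero, Finset.sum_range_succ']
    abel
  rw [hAlast]
  have hg0 : ((-1 : ℤ) ^ (0:ℕ) * (((n + 1).choose 0 : ℕ) : ℤ)) •
        f (p - (((n + 1 : ℕ) : ℤ) - ((0 : ℕ) : ℤ))) (q - ((0 : ℕ) : ℤ)) = A 0 := by
    have : p - (((n + 1 : ℕ) : ℤ) - ((0 : ℕ) : ℤ)) = p - 1 - ((n : ℤ) - ((0:ℕ) : ℤ)) := by
      push_cast; ring
    simp only [hA, this]
    norm_num
  rw [hg0]
  abel

theorem zwMul_add_exp (d e : ℕ) (f : ℤ → ℤ → V) (p q : ℤ) :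
    zwMul (d + e) f p q = zwMul d (zwMul e f) p q := by
  induction d generalizing p q with
  | zero => simp [zwMul_zero_exp]
  | succ d ih =>
    have h1 : d + 1 + e = (d + e) + 1 := by omega
    rw [h1, zwMul_succ, ih, ih, ← zwMul_succ]

end ZW
section ZW2

variable {R : Type*} [CommRing R] {V : Type*} [AddCommGroup V] [Module R V]
variable {W : Type*} [AddCommGroup W] [Module R W]

theorem zwMul_map (φ : V →ₗ[R] W) (n : ℕ) (f : ℤ → ℤ → V) (p q : ℤ) :
    zwMul n (fun p' q' => φ (f p' q')) p q = φ (zwMul n f p q) := by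
  simp [zwMul, map_sum, map_zsmul]

theorem zwMul_add_fun (n : ℕ) (f g : ℤ → ℤ → V) (p q : ℤ) :
    zwMul n (fun p' q' => f p' q' + g p' q') p q = zwMul n f p q + zwMul n g p q := by
  simp [zwMul, smul_add, Finset.sum_add_distrib]

theorem zwMul_sum_fun {ι : Type*} (s : Finset ι) (n : ℕ) (F : ι → ℤ → ℤ → V) (p q : ℤ) :
    zwMul n (fun p' q' => ∑ i ∈ s, F i p' q') p q = ∑ i ∈ s, zwMul n (F i) p q := by
  simp [zwMul, Finset.smul_sum]
  rw [Finset.sum_comm]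

theorem zwMul_rsmul (c : R) (n : ℕ) (f : ℤ → ℤ → V) (p q : ℤ) :
    zwMul n (fun p' q' => c • f p' q') p q = c • zwMul n f p q := by
  simp [zwMul, Finset.smul_sum, smul_comm c]

theorem zwMul_zero_fun (n : ℕ) (p q : ℤ) :
    zwMul n (fun _ _ => (0 : V)) p q = 0 := by
  simp [zwMul]

theorem modH_zwMul {r : R} {M : ℕ} (n : ℕ) {f g : ℤ → ℤ → V}
    (h : ∀ p q : ℤ, ModH r M (f p q) (g p q)) (p q : ℤ) :
    ModH r M (zwMul n f p q) (zwMul n g p q) :=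
  ModH.sum _ _ _ fun i _ => ModH.zsmul _ (h _ _)

/-- Raising the exponent in a thresholded `ModH` statement between `zwMul`s. -/
theorem modH_zwMul_thresh {r : R} {M : ℕ} (d : ℕ) (A : ℕ → ℤ → ℤ → V) (B : ℤ → ℤ → V)
    (h : ∀ p q : ℤ, ∃ r₀ : ℕ, ∀ r₁ : ℕ, r₀ ≤ r₁ → ModH r M (A r₁ p q) (B p q)) :
    ∀ p q : ℤ, ∃ r₀ : ℕ, ∀ r₁ : ℕ, r₀ ≤ r₁ →
      ModH r M (zwMul d (A r₁) p q) (zwMul d B p q) := by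
  intro p q
  choose r₀f hr₀f using h
  refine ⟨(Finset.range (d + 1)).sup
      (fun i => r₀f (p - ((d : ℤ) - (i : ℤ))) (q - (i : ℤ))), fun r₁ hr₁ => ?_⟩
  refine ModH.sum _ _ _ fun i hi => ModH.zsmul _ ?_
  refine hr₀f _ _ _ (le_trans ?_ hr₁)
  exact Finset.le_sup (f := fun i : ℕ => r₀f (p - ((d : ℤ) - (i : ℤ))) (q - (i : ℤ))) hi

end ZW2
section Smash

variable {R : Type*} [CommRing R] {V : Type*} [AddCommGroup V] [Module R V]
variable {H : Type*} [Ring H] [HopfAlgebra R H]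
variable [Module H V] [IsScalarTower R H V] [SMulCommClass R H V]

/-- Auxiliary bilinear piece of the smash-product fields. -/
noncomputable def smashAux (F : VAData R V) (n : ℤ) (u v : V) (b : H) :
    H ⊗[R] H →ₗ[R] V ⊗[R] H :=
  TensorProduct.lift <| LinearMap.mk₂ R
    (fun h1 h2 => (F.Y u n (h1 • v)) ⊗ₜ[R] (h2 * b))
    (fun h1 h1' h2 => by beta_reduce; rw [add_smul, map_add, TensorProduct.add_tmul])
    (fun c h1 h2 => by beta_reduce; rw [smul_assoc, map_smul, TensorProduct.smul_tmul'])
    (fun h1 h2 h2' => by beta_reduce; rw [add_mul, TensorProduct.tmul_add])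
    (fun c h1 h2 => by beta_reduce; rw [smul_mul_assoc, TensorProduct.tmul_smul])

@[simp] theorem smashAux_tmul (F : VAData R V) (n : ℤ) (u v : V) (b : H) (h1 h2 : H) :
    smashAux F n u v b (h1 ⊗ₜ[R] h2) = (F.Y u n (h1 • v)) ⊗ₜ[R] (h2 * b) := rfl

theorem smashAux_add_u (F : VAData R V) (n : ℤ) (u u' v : V) (b : H) (t : H ⊗[R] H) :
    smashAux F (n := n) (u + u') v b t = smashAux F n u v b t + smashAux F n u' v b t := by
  induction t with
  | zero => simp
  | tmul h1 h2 =>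
      simp only [smashAux_tmul, map_add, Pi.add_apply, LinearMap.add_apply,
        TensorProduct.add_tmul]
  | add x y hx hy => simp only [map_add, hx, hy]; abel

theorem smashAux_smul_u (F : VAData R V) (n : ℤ) (c : R) (u v : V) (b : H) (t : H ⊗[R] H) :
    smashAux F n (c • u) v b t = c • smashAux F n u v b t := by
  induction t with
  | zero => simp
  | tmul h1 h2 =>
      simp only [smashAux_tmul, map_smul, Pi.smul_apply, LinearMap.smul_apply,
        TensorProduct.smul_tmul']
  | add x y hx hy => simp only [map_add, hx, hy, smul_add]

theorem smashAux_add_v (F : VAData R V) (n : ℤ) (u v v' : V) (b : H) (t : H ⊗[R] H) :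
    smashAux F n u (v + v') b t = smashAux F n u v b t + smashAux F n u v' b t := by
  induction t with
  | zero => simp
  | tmul h1 h2 =>
      simp only [smashAux_tmul, smul_add, map_add, TensorProduct.add_tmul]
  | add x y hx hy => simp only [map_add, hx, hy]; abel

theorem smashAux_smul_v (F : VAData R V) (n : ℤ) (c : R) (u v : V) (b : H) (t : H ⊗[R] H) :
    smashAux F n u (c • v) b t = c • smashAux F n u v b t := by
  induction t with
  | zero => simp
  | tmul h1 h2 =>
      rw [smashAux_tmul, smashAux_tmul, smul_comm, map_smul, TensorProduct.smul_tmul']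
  | add x y hx hy => simp only [map_add, hx, hy, smul_add]

theorem smashAux_add_b (F : VAData R V) (n : ℤ) (u v : V) (b b' : H) (t : H ⊗[R] H) :
    smashAux F n u v (b + b') t = smashAux F n u v b t + smashAux F n u v b' t := by
  induction t with
  | zero => simp
  | tmul h1 h2 =>
      simp only [smashAux_tmul, mul_add, TensorProduct.tmul_add]
  | add x y hx hy => simp only [map_add, hx, hy]; abel

theorem smashAux_smul_b (F : VAData R V) (n : ℤ) (c : R) (u v : V) (b : H) (t : H ⊗[R] H) :
    smashAux F n u v (c • b) t = c • smashAux F n u v b t := by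
  induction t with
  | zero => simp
  | tmul h1 h2 =>
      rw [smashAux_tmul, smashAux_tmul, mul_smul_comm, TensorProduct.tmul_smul]
  | add x y hx hy => simp only [map_add, hx, hy, smul_add]

/-- The inner endomorphism `Y^{V#H}(u#a, z)` at mode `n`. -/
noncomputable def smashInner (F : VAData R V) (n : ℤ) (u : V) (a : H) :
    Module.End R (V ⊗[R] H) :=
  TensorProduct.lift <| LinearMap.mk₂ R
    (fun v b => smashAux F n u v b (Coalgebra.comul a))
    (fun v v' b => smashAux_add_v F n u v v' b _)
    (fun c v b => smashAux_smul_v F n c u v b _)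
    (fun v b b' => smashAux_add_b F n u v b b' _)
    (fun c v b => smashAux_smul_b F n c u v b _)

@[simp] theorem smashInner_tmul (F : VAData R V) (n : ℤ) (u : V) (a : H) (v : V) (b : H) :
    smashInner F n u a (v ⊗ₜ[R] b) = smashAux F n u v b (Coalgebra.comul a) := rfl

/-- The smash-product mode maps as a linear map on `V ⊗ H`. -/
noncomputable def smashEnd (F : VAData R V) (n : ℤ) :
    (V ⊗[R] H) →ₗ[R] Module.End R (V ⊗[R] H) :=
  TensorProduct.lift <| LinearMap.mk₂ R
    (fun u a => smashInner F n u a)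
    (fun u u' a => by
      apply TensorProduct.ext'
      intro v b
      simp only [smashInner_tmul, LinearMap.add_apply, smashAux_add_u])
    (fun c u a => by
      apply TensorProduct.ext'
      intro v b
      simp only [smashInner_tmul, LinearMap.smul_apply, smashAux_smul_u])
    (fun u a a' => by
      apply TensorProduct.ext'
      intro v b
      simp only [smashInner_tmul, LinearMap.add_apply, map_add])
    (fun c u a => by
      apply TensorProduct.ext'
      intro v b
      simp only [smashInner_tmul, LinearMap.smul_apply, map_smul])

/-- The smash product `V # H` as `VAData`. -/
noncomputable def smashData (F : VAData R V) : VAData R (V ⊗[R] H) where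
  Y :=
    { toFun := fun x n => smashEnd F n x
      map_add' := fun x y => funext fun n => map_add (smashEnd F n) x y
      map_smul' := fun c x => funext fun n => map_smul (smashEnd F n) c x }
  vac := F.vac ⊗ₜ[R] (1 : H)
  T := TensorProduct.map F.T LinearMap.id

theorem smashData_Y_tmul (F : VAData R V) (u : V) (a : H) (n : ℤ) (v : V) (b : H) :
    (smashData F).Y (u ⊗ₜ[R] a) n (v ⊗ₜ[R] b) = smashAux F n u v b (Coalgebra.comul a) := by
  show smashEnd F n (u ⊗ₜ[R] a) (v ⊗ₜ[R] b) = _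
  rw [smashEnd, TensorProduct.lift.tmul]
  rfl

theorem smashData_Y_rep (F : VAData R V) (u : V) (a : H) (n : ℤ) (v : V) (b : H)
    (m : ℕ) (h1 h2 : Fin m → H)
    (hrep : Coalgebra.comul (R := R) a = ∑ i, h1 i ⊗ₜ[R] h2 i) :
    (smashData F).Y (u ⊗ₜ[R] a) n (v ⊗ₜ[R] b)
      = ∑ i, (F.Y u n (h1 i • v)) ⊗ₜ[R] (h2 i * b) := by
  rw [smashData_Y_tmul, hrep, map_sum]
  simp

theorem smashData_char (F : VAData R V) : SmashChar H F (smashData F) := by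
  refine ⟨fun a b h g n m h1 h2 hrep => smashData_Y_rep F a h n b g m h1 h2 hrep, rfl, ?_⟩
  intro a h
  show TensorProduct.map F.T LinearMap.id (a ⊗ₜ[R] h) = _
  simp

end Smash
section Smash2

variable {R : Type*} [CommRing R] {V : Type*} [AddCommGroup V] [Module R V]
variable {H : Type*} [Ring H] [HopfAlgebra R H]
variable [Module H V] [IsScalarTower R H V] [SMulCommClass R H V]

theorem smash_Y_sum_left (F : VAData R V) {ι : Type*} (s : Finset ι)
    (x : ι → V ⊗[R] H) (n : ℤ) (c : V ⊗[R] H) :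
    (smashData F).Y (∑ i ∈ s, x i) n c = ∑ i ∈ s, (smashData F).Y (x i) n c := by
  rw [map_sum]
  simp [Finset.sum_apply, LinearMap.sum_apply]

theorem smash_Y_one_right (F : VAData R V) (v' : V) (n : ℤ) (x : V) (y : H) :
    (smashData F).Y (v' ⊗ₜ[R] (1 : H)) n (x ⊗ₜ[R] y) = (F.Y v' n x) ⊗ₜ[R] y := by
  rw [smashData_Y_tmul, Bialgebra.comul_one, Algebra.TensorProduct.one_def]
  simp

/-- Expansion of the iterated smash fields `Y(u#a) (Y(v#b) (w'#g))`. -/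
theorem smash_Y_Y_expand (F : VAData R V) (hHF : IsHModuleFA H F)
    (u v w' : V) (a b g : H) (n n' : ℤ)
    (m : ℕ) (a1 a2 : Fin m → H)
    (ha : Coalgebra.comul (R := R) a = ∑ i, a1 i ⊗ₜ[R] a2 i)
    (m1 : Fin m → ℕ) (a11 a12 : ∀ i, Fin (m1 i) → H)
    (ha1 : ∀ i, Coalgebra.comul (R := R) (a1 i) = ∑ j, a11 i j ⊗ₜ[R] a12 i j)
    (mb : ℕ) (b1 b2 : Fin mb → H)
    (hb : Coalgebra.comul (R := R) b = ∑ l, b1 l ⊗ₜ[R] b2 l) :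
    (smashData F).Y (u ⊗ₜ[R] a) n ((smashData F).Y (v ⊗ₜ[R] b) n' (w' ⊗ₜ[R] g))
      = ∑ i, ∑ j, ∑ l,
          (F.Y u n (F.Y (a11 i j • v) n' (a12 i j • (b1 l • w')))) ⊗ₜ[R]
            (a2 i * (b2 l * g)) := by
  rw [smashData_Y_rep F v b n' w' g mb b1 b2 hb, map_sum]
  have step : ∀ l, (smashData F).Y (u ⊗ₜ[R] a) n
      ((F.Y v n' (b1 l • w')) ⊗ₜ[R] (b2 l * g))
      = ∑ i, ∑ j, (F.Y u n (F.Y (a11 i j • v) n' (a12 i j • (b1 l • w')))) ⊗ₜ[R]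
          (a2 i * (b2 l * g)) := by
    intro l
    rw [smashData_Y_rep F u a n _ _ m a1 a2 ha]
    refine Finset.sum_congr rfl fun i _ => ?_
    rw [hHF.2.2 (a1 i) v _ n' (m1 i) (a11 i) (a12 i) (ha1 i), map_sum,
      TensorProduct.sum_tmul]
  rw [Finset.sum_congr rfl fun l _ => step l, Finset.sum_comm]
  exact Finset.sum_congr rfl fun i _ => Finset.sum_comm

/-- Expansion of the smash field with first slot `u # (α * β)`. -/
theorem smash_Y_mul_expand (F : VAData R V) (u w' : V) (α β g : H) (n : ℤ)
    (mα : ℕ) (α1 α2 : Fin mα → H)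
    (hα : Coalgebra.comul (R := R) α = ∑ j, α1 j ⊗ₜ[R] α2 j)
    (mb : ℕ) (b1 b2 : Fin mb → H)
    (hb : Coalgebra.comul (R := R) β = ∑ l, b1 l ⊗ₜ[R] b2 l) :
    (smashData F).Y (u ⊗ₜ[R] (α * β)) n (w' ⊗ₜ[R] g)
      = ∑ j, ∑ l, (F.Y u n (α1 j • (b1 l • w'))) ⊗ₜ[R] (α2 j * (b2 l * g)) := by
  rw [smashData_Y_tmul]
  have hcm : Coalgebra.comul (R := R) (α * β)
      = ∑ j, ∑ l, (α1 j * b1 l) ⊗ₜ[R] (α2 j * b2 l) := by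
    rw [Bialgebra.comul_mul, hα, hb, Finset.sum_mul_sum]
    simp [Algebra.TensorProduct.tmul_mul_tmul]
  rw [hcm, map_sum]
  refine Finset.sum_congr rfl fun j _ => ?_
  rw [map_sum]
  refine Finset.sum_congr rfl fun l _ => ?_
  rw [smashAux_tmul, mul_smul, mul_assoc]

/-- Expansion of the composed field `Y(Y(u#a) (v#b)) (w'#g)`. -/
theorem smash_Y_comp_expand (F : VAData R V)
    (u v w' : V) (a b g : H) (n n' : ℤ)
    (m : ℕ) (a1 a2 : Fin m → H)
    (ha : Coalgebra.comul (R := R) a = ∑ i, a1 i ⊗ₜ[R] a2 i)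
    (m2 : Fin m → ℕ) (a21 a22 : ∀ i, Fin (m2 i) → H)
    (ha2 : ∀ i, Coalgebra.comul (R := R) (a2 i) = ∑ j, a21 i j ⊗ₜ[R] a22 i j)
    (mb : ℕ) (b1 b2 : Fin mb → H)
    (hb : Coalgebra.comul (R := R) b = ∑ l, b1 l ⊗ₜ[R] b2 l) :
    (smashData F).Y ((smashData F).Y (u ⊗ₜ[R] a) n (v ⊗ₜ[R] b)) n' (w' ⊗ₜ[R] g)
      = ∑ i, ∑ j, ∑ l,
          (F.Y (F.Y u n (a1 i • v)) n' (a21 i j • (b1 l • w'))) ⊗ₜ[R]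
            (a22 i j * (b2 l * g)) := by
  rw [smashData_Y_rep F u a n v b m a1 a2 ha, smash_Y_sum_left]
  exact Finset.sum_congr rfl fun i _ =>
    smash_Y_mul_expand F (F.Y u n (a1 i • v)) w' (a2 i) b g n' (m2 i) (a21 i) (a22 i)
      (ha2 i) mb b1 b2 hb

end Smash2
section Reps

variable {R : Type*} [CommRing R]

theorem tensor_exists_fin {M N : Type*} [AddCommGroup M] [Module R M]
    [AddCommGroup N] [Module R N] (t : M ⊗[R] N) :
    ∃ (m : ℕ) (x : Fin m → M) (y : Fin m → N), t = ∑ i, x i ⊗ₜ[R] y i := by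
  induction t with
  | zero => exact ⟨0, ![], ![], by simp⟩
  | tmul a b => exact ⟨1, ![a], ![b], by simp⟩
  | add s t hs ht =>
    obtain ⟨m, x, y, rfl⟩ := hs
    obtain ⟨m', x', y', rfl⟩ := ht
    refine ⟨m + m', Fin.append x x', Fin.append y y', ?_⟩
    rw [Fin.sum_univ_add]
    simp [Fin.append_left, Fin.append_right]

variable {V : Type*} [AddCommGroup V] [Module R V]
variable {H : Type*} [Ring H] [HopfAlgebra R H]
variable {W : Type*} [AddCommGroup W] [Module R W]

theorem coassoc_trilinear_sum (φ : H →ₗ[R] H →ₗ[R] H →ₗ[R] W) (a : H)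
    (m : ℕ) (a1 a2 : Fin m → H)
    (ha : Coalgebra.comul (R := R) a = ∑ i, a1 i ⊗ₜ[R] a2 i)
    (m1 : Fin m → ℕ) (a11 a12 : ∀ i, Fin (m1 i) → H)
    (ha1 : ∀ i, Coalgebra.comul (R := R) (a1 i) = ∑ j, a11 i j ⊗ₜ[R] a12 i j)
    (m2 : Fin m → ℕ) (a21 a22 : ∀ i, Fin (m2 i) → H)
    (ha2 : ∀ i, Coalgebra.comul (R := R) (a2 i) = ∑ j, a21 i j ⊗ₜ[R] a22 i j) :
    ∑ i, ∑ j, φ (a11 i j) (a12 i j) (a2 i) = ∑ i, ∑ j, φ (a1 i) (a21 i j) (a22 i j) := by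
  set L : H ⊗[R] (H ⊗[R] H) →ₗ[R] W :=
    TensorProduct.lift ((TensorProduct.lift.equiv (RingHom.id R) H H W).toLinearMap.comp φ) with hL
  have hLt : ∀ x y z : H, L (x ⊗ₜ[R] (y ⊗ₜ[R] z)) = φ x y z := by
    intro x y z
    simp [hL, TensorProduct.lift.equiv]
  have hco := Coalgebra.coassoc_apply (R := R) (A := H) a
  have E1 : (Coalgebra.comul (R := R)).rTensor H (Coalgebra.comul (R := R) a)
      = ∑ i, ∑ j, (a11 i j ⊗ₜ[R] a12 i j) ⊗ₜ[R] a2 i := by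
    rw [ha, map_sum]
    refine Finset.sum_congr rfl fun i _ => ?_
    rw [LinearMap.rTensor_tmul, ha1 i, TensorProduct.sum_tmul]
  have E2 : (Coalgebra.comul (R := R)).lTensor H (Coalgebra.comul (R := R) a)
      = ∑ i, ∑ j, a1 i ⊗ₜ[R] (a21 i j ⊗ₜ[R] a22 i j) := by
    rw [ha, map_sum]
    refine Finset.sum_congr rfl fun i _ => ?_
    rw [LinearMap.lTensor_tmul, ha2 i, TensorProduct.tmul_sum]
  rw [E1, E2] at hco
  have hco2 : (∑ i, ∑ j, (a11 i j : H) ⊗ₜ[R] ((a12 i j) ⊗ₜ[R] (a2 i)))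
      = ∑ i, ∑ j, a1 i ⊗ₜ[R] (a21 i j ⊗ₜ[R] a22 i j) := by
    rw [← hco]
    simp only [map_sum, TensorProduct.assoc_tmul]
  have := congrArg L hco2
  rw [map_sum, map_sum] at this
  simpa only [map_sum, hLt] using this

/-- The action of `H` on `V` as a linear map. -/
def actV [Module H V] [IsScalarTower R H V] (v : V) : H →ₗ[R] V where
  toFun := fun h => h • v
  map_add' := fun x y => add_smul x y v
  map_smul' := fun c x => smul_assoc c x v

@[simp] theorem actV_apply [Module H V] [IsScalarTower R H V] (v : V) (h : H) :
    actV (R := R) v h = h • v := rfl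

theorem coassoc_B_sum [Module H V] [IsScalarTower R H V]
    (B : V →ₗ[R] V →ₗ[R] V) (v c₀ : V) (g₀ : H) (a : H)
    (m : ℕ) (a1 a2 : Fin m → H)
    (ha : Coalgebra.comul (R := R) a = ∑ i, a1 i ⊗ₜ[R] a2 i)
    (m1 : Fin m → ℕ) (a11 a12 : ∀ i, Fin (m1 i) → H)
    (ha1 : ∀ i, Coalgebra.comul (R := R) (a1 i) = ∑ j, a11 i j ⊗ₜ[R] a12 i j)
    (m2 : Fin m → ℕ) (a21 a22 : ∀ i, Fin (m2 i) → H)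
    (ha2 : ∀ i, Coalgebra.comul (R := R) (a2 i) = ∑ j, a21 i j ⊗ₜ[R] a22 i j) :
    ∑ i, ∑ j, (B (a11 i j • v) (a12 i j • c₀)) ⊗ₜ[R] (a2 i * g₀)
      = ∑ i, ∑ j, (B (a1 i • v) (a21 i j • c₀)) ⊗ₜ[R] (a22 i j * g₀) := by
  let φ : H →ₗ[R] H →ₗ[R] H →ₗ[R] V ⊗[R] H :=
    LinearMap.mk₂ R (fun x y =>
        (TensorProduct.mk R V H (B (x • v) (y • c₀))).comp (LinearMap.mulRight R g₀))
      (fun x x' y => by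
        ext z
        simp [add_smul, map_add, LinearMap.add_apply, TensorProduct.add_tmul])
      (fun c x y => by
        ext z
        simp [smul_assoc, map_smul, LinearMap.smul_apply, TensorProduct.smul_tmul'])
      (fun x y y' => by
        ext z
        simp [add_smul, map_add, LinearMap.add_apply, TensorProduct.add_tmul])
      (fun c x y => by
        ext z
        simp [smul_assoc, map_smul, LinearMap.smul_apply, TensorProduct.smul_tmul'])
  have key := coassoc_trilinear_sum φ a m a1 a2 ha m1 a11 a12 ha1 m2 a21 a22 ha2
  simpa only [φ, LinearMap.mk₂_apply, LinearMap.comp_apply, LinearMap.mulRight_apply,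
    TensorProduct.mk_apply] using key

end Reps
section PtLin

variable {R : Type*} [CommRing R] {V : Type*} [AddCommGroup V] [Module R V]

namespace VAData

variable (G : VAData R V)

theorem compLHStr_add1 (J : ℕ) (x x' y c : V) (p q : ℤ) :
    G.compLHStr J (x + x') y c p q = G.compLHStr J x y c p q + G.compLHStr J x' y c p q := by
  simp [compLHStr, map_add, Pi.add_apply, LinearMap.add_apply, smul_add,
    Finset.sum_add_distrib]

theorem compLHStr_add2 (J : ℕ) (x y y' c : V) (p q : ℤ) :
    G.compLHStr J x (y + y') c p q = G.compLHStr J x y c p q + G.compLHStr J x y' c p q := by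
  simp [compLHStr, map_add, Pi.add_apply, LinearMap.add_apply, smul_add,
    Finset.sum_add_distrib]

theorem compLHStr_add3 (J : ℕ) (x y c c' : V) (p q : ℤ) :
    G.compLHStr J x y (c + c') p q = G.compLHStr J x y c p q + G.compLHStr J x y c' p q := by
  simp [compLHStr, map_add, Pi.add_apply, LinearMap.add_apply, smul_add,
    Finset.sum_add_distrib]

theorem compLHStr_zero1 (J : ℕ) (y c : V) (p q : ℤ) : G.compLHStr J 0 y c p q = 0 := by
  simp [compLHStr]

theorem compLHStr_zero2 (J : ℕ) (x c : V) (p q : ℤ) : G.compLHStr J x 0 c p q = 0 := by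
  simp [compLHStr]

theorem compLHStr_zero3 (J : ℕ) (x y : V) (p q : ℤ) : G.compLHStr J x y 0 p q = 0 := by
  simp [compLHStr]

theorem compRHS_add1 (x x' y c : V) (p q : ℤ) :
    G.compRHS (x + x') y c p q = G.compRHS x y c p q + G.compRHS x' y c p q := by
  simp [compRHS, map_add, Pi.add_apply, LinearMap.add_apply, smul_add]

theorem compRHS_add2 (x y y' c : V) (p q : ℤ) :
    G.compRHS x (y + y') c p q = G.compRHS x y c p q + G.compRHS x y' c p q := by
  simp [compRHS, map_add, Pi.add_apply, LinearMap.add_apply, smul_add]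

theorem compRHS_add3 (x y c c' : V) (p q : ℤ) :
    G.compRHS x y (c + c') p q = G.compRHS x y c p q + G.compRHS x y c' p q := by
  simp [compRHS, map_add, Pi.add_apply, LinearMap.add_apply, smul_add]

theorem compRHS_zero1 (y c : V) (p q : ℤ) : G.compRHS 0 y c p q = 0 := by
  simp [compRHS]

theorem compRHS_zero2 (x c : V) (p q : ℤ) : G.compRHS x 0 c p q = 0 := by
  simp [compRHS]

theorem compRHS_zero3 (x y : V) (p q : ℤ) : G.compRHS x y 0 p q = 0 := by
  simp [compRHS]

theorem prodZW_add3 (x y c c' : V) (p q : ℤ) :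
    G.prodZW x y (c + c') p q = G.prodZW x y c p q + G.prodZW x y c' p q := by
  simp [prodZW, map_add]

theorem prodZW_zero3 (x y : V) (p q : ℤ) : G.prodZW x y 0 p q = 0 := by
  simp [prodZW]

theorem prodWZ_add3 (x y c c' : V) (p q : ℤ) :
    G.prodWZ x y (c + c') p q = G.prodWZ x y c p q + G.prodWZ x y c' p q := by
  simp [prodWZ, map_add]

theorem prodWZ_zero3 (x y : V) (p q : ℤ) : G.prodWZ x y 0 p q = 0 := by
  simp [prodWZ]

/-- `compLHStr` as a bilinear map in the second and third slots. -/
noncomputable def compLHStrB (J : ℕ) (u : V) (p q : ℤ) : V →ₗ[R] V →ₗ[R] V :=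
  LinearMap.mk₂ R (fun x y => G.compLHStr J u x y p q)
    (fun x x' y => by beta_reduce; rw [compLHStr_add2])
    (fun c x y => by
      beta_reduce
      simp only [compLHStr, map_smul, Pi.smul_apply, LinearMap.smul_apply]
      have hsc : ∀ (e : ℤ) (w : V), e • (c • w) = c • (e • w) := fun e w => smul_comm e c w
      simp only [hsc, ← Finset.smul_sum])
    (fun x y y' => by beta_reduce; rw [compLHStr_add3])
    (fun c x y => by
      beta_reduce
      simp only [compLHStr, map_smul, Pi.smul_apply, LinearMap.smul_apply]
      have hsc : ∀ (e : ℤ) (w : V), e • (c • w) = c • (e • w) := fun e w => smul_comm e c w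
      simp only [hsc, ← Finset.smul_sum])

@[simp] theorem compLHStrB_apply (J : ℕ) (u : V) (p q : ℤ) (x y : V) :
    G.compLHStrB J u p q x y = G.compLHStr J u x y p q := rfl

/-- `compRHS` as a bilinear map in the second and third slots. -/
noncomputable def compRHSB (u : V) (p q : ℤ) : V →ₗ[R] V →ₗ[R] V :=
  LinearMap.mk₂ R (fun x y => G.compRHS u x y p q)
    (fun x x' y => by beta_reduce; rw [compRHS_add2])
    (fun c x y => by
      beta_reduce
      simp only [compRHS, map_smul, Pi.smul_apply, LinearMap.smul_apply]
      have hsc : ∀ (e : ℤ) (w : V), e • (c • w) = c • (e • w) := fun e w => smul_comm e c w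
      simp only [hsc])
    (fun x y y' => by beta_reduce; rw [compRHS_add3])
    (fun c x y => by
      beta_reduce
      simp only [compRHS, map_smul, Pi.smul_apply, LinearMap.smul_apply]
      have hsc : ∀ (e : ℤ) (w : V), e • (c • w) = c • (e • w) := fun e w => smul_comm e c w
      simp only [hsc])

@[simp] theorem compRHSB_apply (u : V) (p q : ℤ) (x y : V) :
    G.compRHSB u p q x y = G.compRHS u x y p q := rfl

/-- `zwMul nn ∘ prodWZ` as a bilinear map in the second and third slots. -/
noncomputable def prodWZB (nn : ℕ) (u : V) (p q : ℤ) : V →ₗ[R] V →ₗ[R] V :=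
  LinearMap.mk₂ R (fun x y => zwMul nn (G.prodWZ u x y) p q)
    (fun x x' y => by
      beta_reduce
      simp [zwMul, prodWZ, map_add, Pi.add_apply, LinearMap.add_apply, smul_add,
        Finset.sum_add_distrib])
    (fun c x y => by
      beta_reduce
      simp only [zwMul, prodWZ, map_smul, Pi.smul_apply, LinearMap.smul_apply]
      have hsc : ∀ (e : ℤ) (w : V), e • (c • w) = c • (e • w) := fun e w => smul_comm e c w
      simp only [hsc, ← Finset.smul_sum])
    (fun x y y' => by
      beta_reduce
      simp [zwMul, prodWZ, map_add, smul_add, Finset.sum_add_distrib])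
    (fun c x y => by
      beta_reduce
      simp only [zwMul, prodWZ, map_smul, Pi.smul_apply, LinearMap.smul_apply]
      have hsc : ∀ (e : ℤ) (w : V), e • (c • w) = c • (e • w) := fun e w => smul_comm e c w
      simp only [hsc, ← Finset.smul_sum])

@[simp] theorem prodWZB_apply (nn : ℕ) (u : V) (p q : ℤ) (x y : V) :
    G.prodWZB nn u p q x y = zwMul nn (G.prodWZ u x y) p q := rfl

end VAData

/-- Raising the outer exponent in a thresholded associativity statement. -/
theorem ModH_assoc_raise {r : R} {M : ℕ} (N N' : ℕ) (hNN : N ≤ N')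
    {f : ℕ → ℤ → ℤ → V} {g : ℤ → ℤ → V}
    (h : ∀ p q : ℤ, ∃ J₀ : ℕ, ∀ J : ℕ, J₀ ≤ J →
      ModH r M (zwMul N (f J) p q) (zwMul N g p q)) :
    ∀ p q : ℤ, ∃ J₀ : ℕ, ∀ J : ℕ, J₀ ≤ J →
      ModH r M (zwMul N' (f J) p q) (zwMul N' g p q) := by
  obtain ⟨d, rfl⟩ : ∃ d, N' = d + N := ⟨N' - N, by omega⟩
  intro p q
  obtain ⟨J₀, hJ⟩ := modH_zwMul_thresh d (fun J => zwMul N (f J)) (zwMul N g) h p q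
  exact ⟨J₀, fun J hJ' => by
    rw [zwMul_add_exp d N (f J) p q, zwMul_add_exp d N g p q]
    exact hJ J hJ'⟩

/-- Combining two thresholded associativity statements additively. -/
theorem ModH_assoc_combine {r : R} {M : ℕ}
    {fa fb fc : ℕ → ℤ → ℤ → V} {ga gb gc : ℤ → ℤ → V}
    (hfc : ∀ (J : ℕ) (p q : ℤ), fc J p q = fa J p q + fb J p q)
    (hgc : ∀ p q : ℤ, gc p q = ga p q + gb p q)
    (h1 : ∃ N : ℕ, ∀ p q : ℤ, ∃ J₀ : ℕ, ∀ J : ℕ, J₀ ≤ J →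
      ModH r M (zwMul N (fa J) p q) (zwMul N ga p q))
    (h2 : ∃ N : ℕ, ∀ p q : ℤ, ∃ J₀ : ℕ, ∀ J : ℕ, J₀ ≤ J →
      ModH r M (zwMul N (fb J) p q) (zwMul N gb p q)) :
    ∃ N : ℕ, ∀ p q : ℤ, ∃ J₀ : ℕ, ∀ J : ℕ, J₀ ≤ J →
      ModH r M (zwMul N (fc J) p q) (zwMul N gc p q) := by
  obtain ⟨N1, h1⟩ := h1
  obtain ⟨N2, h2⟩ := h2
  refine ⟨max N1 N2, fun p q => ?_⟩
  obtain ⟨J₁, hJ₁⟩ := ModH_assoc_raise N1 (max N1 N2) (le_max_left _ _) h1 p q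
  obtain ⟨J₂, hJ₂⟩ := ModH_assoc_raise N2 (max N1 N2) (le_max_right _ _) h2 p q
  refine ⟨max J₁ J₂, fun J hJ => ?_⟩
  have e1 : fc J = fun p' q' => fa J p' q' + fb J p' q' := funext fun p' => funext fun q' => hfc J p' q'
  have e2 : gc = fun p' q' => ga p' q' + gb p' q' := funext fun p' => funext fun q' => hgc p' q'
  rw [e1, e2, zwMul_add_fun, zwMul_add_fun]
  exact ModH.add (hJ₁ J (le_trans (le_max_left _ _) hJ))
    (hJ₂ J (le_trans (le_max_right _ _) hJ))

end PtLin
section SwapHelpers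

variable {R : Type*} [CommRing R] {V : Type*} [AddCommGroup V] [Module R V]
variable {A : Type*} [AddCommGroup A]

theorem smul_swap3' {m mb : ℕ} {m1 : Fin m → ℕ} (e : ℤ)
    (X : ∀ i : Fin m, Fin (m1 i) → Fin mb → A) :
    e • ∑ i, ∑ j, ∑ l, X i j l = ∑ l, ∑ i, ∑ j, e • X i j l := by
  simp only [Finset.smul_sum]
  calc (∑ i, ∑ j, ∑ l, e • X i j l)
      = ∑ i, ∑ l, ∑ j, e • X i j l :=
        Finset.sum_congr rfl fun i _ => Finset.sum_comm
    _ = ∑ l, ∑ i, ∑ j, e • X i j l := Finset.sum_comm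

theorem smul_sum_swap3 {m mb : ℕ} {m1 : Fin m → ℕ} (J : ℕ) (e : ℤ) (coef : ℕ → ℤ)
    (X : ℕ → ∀ i : Fin m, Fin (m1 i) → Fin mb → A) :
    e • ∑ j' ∈ Finset.range J, coef j' • ∑ i, ∑ j, ∑ l, X j' i j l
      = ∑ l, ∑ i, ∑ j, e • ∑ j' ∈ Finset.range J, coef j' • X j' i j l := by
  simp only [Finset.smul_sum]
  calc (∑ j' ∈ Finset.range J, ∑ i, ∑ j, ∑ l, e • coef j' • X j' i j l)
      = ∑ i, ∑ j' ∈ Finset.range J, ∑ j, ∑ l, e • coef j' • X j' i j l := Finset.sum_comm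
    _ = ∑ i, ∑ j' ∈ Finset.range J, ∑ l, ∑ j, e • coef j' • X j' i j l :=
        Finset.sum_congr rfl fun i _ => Finset.sum_congr rfl fun j' _ => Finset.sum_comm
    _ = ∑ i, ∑ l, ∑ j' ∈ Finset.range J, ∑ j, e • coef j' • X j' i j l :=
        Finset.sum_congr rfl fun i _ => Finset.sum_comm
    _ = ∑ l, ∑ i, ∑ j' ∈ Finset.range J, ∑ j, e • coef j' • X j' i j l := Finset.sum_comm
    _ = ∑ l, ∑ i, ∑ j, ∑ j' ∈ Finset.range J, e • coef j' • X j' i j l :=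
        Finset.sum_congr rfl fun l _ => Finset.sum_congr rfl fun i _ => Finset.sum_comm

variable {H : Type*} [Ring H] [HopfAlgebra R H]

theorem zsmulsum_tmul (e : ℤ) (J : ℕ) (coef : ℕ → ℤ) (f : ℕ → V) (h : H) :
    (e • ∑ j' ∈ Finset.range J, coef j' • f j') ⊗ₜ[R] h
      = e • ∑ j' ∈ Finset.range J, coef j' • (f j' ⊗ₜ[R] h) := by
  rw [Finset.sum_congr rfl fun (j' : ℕ) (_ : j' ∈ Finset.range J) =>
    TensorProduct.smul_tmul' (coef j') (f j') h, ← TensorProduct.sum_tmul,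
    TensorProduct.smul_tmul']

end SwapHelpers

section SmashAssoc

variable {R : Type*} [CommRing R] {V : Type*} [AddCommGroup V] [Module R V]
variable {H : Type*} [Ring H] [HopfAlgebra R H]
variable [Module H V] [IsScalarTower R H V] [SMulCommClass R H V]

theorem smash_assoc (F : VAData R V) (hHF : IsHModuleFA H F) (r : R) (M : ℕ)
    (hassoc : ∀ a b c : V, ∃ N : ℕ, ∀ p q : ℤ, ∃ J₀ : ℕ, ∀ J : ℕ, J₀ ≤ J →
      ModH r M (zwMul N (F.compLHStr J a b c) p q) (zwMul N (F.compRHS a b c) p q))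
    (x y c : V ⊗[R] H) :
    ∃ N : ℕ, ∀ p q : ℤ, ∃ J₀ : ℕ, ∀ J : ℕ, J₀ ≤ J →
      ModH r M (zwMul N ((smashData F).compLHStr J x y c) p q)
        (zwMul N ((smashData F).compRHS x y c) p q) := by
  classical
  choose Nf hNf using hassoc
  induction x using TensorProduct.induction_on with
  | zero =>
    refine ⟨0, fun p q => ⟨0, fun J _ => ?_⟩⟩
    have e1 : (smashData F).compLHStr J 0 y c = fun _ _ => (0 : V ⊗[R] H) :=
      funext fun p' => funext fun q' => (smashData F).compLHStr_zero1 J y c p' q'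
    have e2 : (smashData F).compRHS 0 y c = fun _ _ => (0 : V ⊗[R] H) :=
      funext fun p' => funext fun q' => (smashData F).compRHS_zero1 y c p' q'
    rw [e1, e2, zwMul_zero_fun]
    exact ModH.refl 0
  | add x₁ x₂ h1 h2 =>
    exact ModH_assoc_combine
      (fun J p q => (smashData F).compLHStr_add1 J x₁ x₂ y c p q)
      (fun p q => (smashData F).compRHS_add1 x₁ x₂ y c p q) h1 h2
  | tmul u a =>
  induction y using TensorProduct.induction_on with
  | zero =>
    refine ⟨0, fun p q => ⟨0, fun J _ => ?_⟩⟩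
    have e1 : (smashData F).compLHStr J (u ⊗ₜ[R] a) 0 c = fun _ _ => (0 : V ⊗[R] H) :=
      funext fun p' => funext fun q' => (smashData F).compLHStr_zero2 J _ c p' q'
    have e2 : (smashData F).compRHS (u ⊗ₜ[R] a) 0 c = fun _ _ => (0 : V ⊗[R] H) :=
      funext fun p' => funext fun q' => (smashData F).compRHS_zero2 _ c p' q'
    rw [e1, e2, zwMul_zero_fun]
    exact ModH.refl 0
  | add y₁ y₂ h1 h2 =>
    exact ModH_assoc_combine
      (fun J p q => (smashData F).compLHStr_add2 J _ y₁ y₂ c p q)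
      (fun p q => (smashData F).compRHS_add2 _ y₁ y₂ c p q) h1 h2
  | tmul v b =>
  induction c using TensorProduct.induction_on with
  | zero =>
    refine ⟨0, fun p q => ⟨0, fun J _ => ?_⟩⟩
    have e1 : (smashData F).compLHStr J (u ⊗ₜ[R] a) (v ⊗ₜ[R] b) 0 = fun _ _ => (0 : V ⊗[R] H) :=
      funext fun p' => funext fun q' => (smashData F).compLHStr_zero3 J _ _ p' q'
    have e2 : (smashData F).compRHS (u ⊗ₜ[R] a) (v ⊗ₜ[R] b) 0 = fun _ _ => (0 : V ⊗[R] H) :=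
      funext fun p' => funext fun q' => (smashData F).compRHS_zero3 _ _ p' q'
    rw [e1, e2, zwMul_zero_fun]
    exact ModH.refl 0
  | add c₁ c₂ h1 h2 =>
    exact ModH_assoc_combine
      (fun J p q => (smashData F).compLHStr_add3 J _ _ c₁ c₂ p q)
      (fun p q => (smashData F).compRHS_add3 _ _ c₁ c₂ p q) h1 h2
  | tmul w' g =>
    obtain ⟨m, a1, a2, ha⟩ := tensor_exists_fin (Coalgebra.comul (R := R) a)
    choose m1 a11 a12 ha1 using fun i => tensor_exists_fin (Coalgebra.comul (R := R) (a1 i))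
    choose m2 a21 a22 ha2 using fun i => tensor_exists_fin (Coalgebra.comul (R := R) (a2 i))
    obtain ⟨mb, b1, b2, hb⟩ := tensor_exists_fin (Coalgebra.comul (R := R) b)
    have hYY : ∀ n n' : ℤ, (smashData F).Y (u ⊗ₜ[R] a) n
        ((smashData F).Y (v ⊗ₜ[R] b) n' (w' ⊗ₜ[R] g))
        = ∑ i, ∑ j, ∑ l, (F.Y u n (F.Y (a11 i j • v) n' (a12 i j • (b1 l • w')))) ⊗ₜ[R]
            (a2 i * (b2 l * g)) :=
      fun n n' => smash_Y_Y_expand F hHF u v w' a b g n n' m a1 a2 ha m1 a11 a12 ha1 mb b1 b2 hb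
    have expandL : ∀ (J : ℕ) (p q : ℤ),
        (smashData F).compLHStr J (u ⊗ₜ[R] a) (v ⊗ₜ[R] b) (w' ⊗ₜ[R] g) p q
        = ∑ l, ∑ i, ∑ j,
            (F.compLHStr J u (a1 i • v) (a21 i j • (b1 l • w')) p q)
              ⊗ₜ[R] (a22 i j * (b2 l * g)) := by
      intro J p q
      calc (smashData F).compLHStr J (u ⊗ₜ[R] a) (v ⊗ₜ[R] b) (w' ⊗ₜ[R] g) p q
          = ∑ l, ∑ i, ∑ j,
              (F.compLHStr J u (a11 i j • v) (a12 i j • (b1 l • w')) p q)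
                ⊗ₜ[R] (a2 i * (b2 l * g)) := by
            simp only [VAData.compLHStr, hYY]
            rw [smul_sum_swap3]
            refine Finset.sum_congr rfl fun l _ => Finset.sum_congr rfl fun i _ =>
              Finset.sum_congr rfl fun j _ => ?_
            exact (zsmulsum_tmul _ _ _ _ _).symm
        _ = _ := by
            refine Finset.sum_congr rfl fun l _ => ?_
            simpa only [VAData.compLHStrB_apply] using
              coassoc_B_sum (F.compLHStrB J u p q) v (b1 l • w') (b2 l * g) a
                m a1 a2 ha m1 a11 a12 ha1 m2 a21 a22 ha2
    have expandR : ∀ p q : ℤ,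
        (smashData F).compRHS (u ⊗ₜ[R] a) (v ⊗ₜ[R] b) (w' ⊗ₜ[R] g) p q
        = ∑ l, ∑ i, ∑ j,
            (F.compRHS u (a1 i • v) (a21 i j • (b1 l • w')) p q)
              ⊗ₜ[R] (a22 i j * (b2 l * g)) := by
      intro p q
      simp only [VAData.compRHS,
        smash_Y_comp_expand F u v w' a b g (-p - 1) (-q - 1) m a1 a2 ha m2 a21 a22 ha2
          mb b1 b2 hb]
      rw [smul_swap3']
      refine Finset.sum_congr rfl fun l _ => Finset.sum_congr rfl fun i _ =>
        Finset.sum_congr rfl fun j _ => ?_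
      rw [TensorProduct.smul_tmul']
    set N : ℕ := Finset.univ.sup (fun l : Fin mb => Finset.univ.sup (fun i : Fin m =>
      Finset.univ.sup (fun j : Fin (m2 i) =>
        Nf u (a1 i • v) (a21 i j • (b1 l • w'))))) with hN
    have hNle : ∀ (l : Fin mb) (i : Fin m) (j : Fin (m2 i)),
        Nf u (a1 i • v) (a21 i j • (b1 l • w')) ≤ N := by
      intro l i j
      calc Nf u (a1 i • v) (a21 i j • (b1 l • w'))
          ≤ Finset.univ.sup (fun j : Fin (m2 i) =>
              Nf u (a1 i • v) (a21 i j • (b1 l • w'))) :=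
            Finset.le_sup (f := fun j : Fin (m2 i) =>
              Nf u (a1 i • v) (a21 i j • (b1 l • w'))) (Finset.mem_univ j)
        _ ≤ Finset.univ.sup (fun i : Fin m => Finset.univ.sup (fun j : Fin (m2 i) =>
              Nf u (a1 i • v) (a21 i j • (b1 l • w')))) :=
            Finset.le_sup (f := fun i : Fin m => Finset.univ.sup (fun j : Fin (m2 i) =>
              Nf u (a1 i • v) (a21 i j • (b1 l • w')))) (Finset.mem_univ i)
        _ ≤ N := Finset.le_sup (f := fun l : Fin mb => Finset.univ.sup (fun i : Fin m =>
              Finset.univ.sup (fun j : Fin (m2 i) =>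
                Nf u (a1 i • v) (a21 i j • (b1 l • w'))))) (Finset.mem_univ l)
    have raised : ∀ (l : Fin mb) (i : Fin m) (j : Fin (m2 i)), ∀ p' q' : ℤ,
        ∃ J₀ : ℕ, ∀ J : ℕ, J₀ ≤ J →
          ModH r M (zwMul N (F.compLHStr J u (a1 i • v) (a21 i j • (b1 l • w'))) p' q')
            (zwMul N (F.compRHS u (a1 i • v) (a21 i j • (b1 l • w'))) p' q') :=
      fun l i j => ModH_assoc_raise _ N (hNle l i j) (hNf u _ _)
    refine ⟨N, fun p q => ?_⟩
    choose J₀f hJ₀f using fun l i j => raised l i j p q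
    refine ⟨Finset.univ.sup (fun l : Fin mb => Finset.univ.sup (fun i : Fin m =>
      Finset.univ.sup (fun j : Fin (m2 i) => J₀f l i j))), fun J hJ => ?_⟩
    have hJle : ∀ (l : Fin mb) (i : Fin m) (j : Fin (m2 i)), J₀f l i j ≤ J := by
      intro l i j
      refine le_trans ?_ hJ
      calc J₀f l i j
          ≤ Finset.univ.sup (fun j : Fin (m2 i) => J₀f l i j) :=
            Finset.le_sup (f := fun j : Fin (m2 i) => J₀f l i j) (Finset.mem_univ j)
        _ ≤ Finset.univ.sup (fun i : Fin m =>
              Finset.univ.sup (fun j : Fin (m2 i) => J₀f l i j)) :=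
            Finset.le_sup (f := fun i : Fin m => Finset.univ.sup
              (fun j : Fin (m2 i) => J₀f l i j)) (Finset.mem_univ i)
        _ ≤ _ := Finset.le_sup (f := fun l : Fin mb => Finset.univ.sup (fun i : Fin m =>
              Finset.univ.sup (fun j : Fin (m2 i) => J₀f l i j))) (Finset.mem_univ l)
    have eL : (smashData F).compLHStr J (u ⊗ₜ[R] a) (v ⊗ₜ[R] b) (w' ⊗ₜ[R] g)
        = fun p' q' => ∑ l, ∑ i, ∑ j,
            (F.compLHStr J u (a1 i • v) (a21 i j • (b1 l • w')) p' q')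
              ⊗ₜ[R] (a22 i j * (b2 l * g)) :=
      funext fun p' => funext fun q' => expandL J p' q'
    have eR : (smashData F).compRHS (u ⊗ₜ[R] a) (v ⊗ₜ[R] b) (w' ⊗ₜ[R] g)
        = fun p' q' => ∑ l, ∑ i, ∑ j,
            (F.compRHS u (a1 i • v) (a21 i j • (b1 l • w')) p' q')
              ⊗ₜ[R] (a22 i j * (b2 l * g)) :=
      funext fun p' => funext fun q' => expandR p' q'
    rw [eL, eR, zwMul_sum_fun, zwMul_sum_fun]
    refine ModH.sum _ _ _ fun l _ => ?_
    rw [zwMul_sum_fun, zwMul_sum_fun]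
    refine ModH.sum _ _ _ fun i _ => ?_
    rw [zwMul_sum_fun, zwMul_sum_fun]
    refine ModH.sum _ _ _ fun j _ => ?_
    have eT : ∀ (G : ℤ → ℤ → V) (h : H), zwMul N (fun p' q' => (G p' q') ⊗ₜ[R] h) p q
        = (zwMul N G p q) ⊗ₜ[R] h := by
      intro G h
      have := zwMul_map ((TensorProduct.mk R V H).flip h) N G p q
      simpa using this
    rw [eT, eT]
    exact ModH.map ((TensorProduct.mk R V H).flip (a22 i j * (b2 l * g)))
      (hJ₀f l i j J (hJle l i j))

end SmashAssoc
section SlocHelpers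

variable {R : Type*} [CommRing R] {V : Type*} [AddCommGroup V] [Module R V]
variable {A : Type*} [AddCommGroup A] [Module R A]

theorem sum_rot3 {m mb : ℕ} {m1 : Fin m → ℕ} (X : ∀ i : Fin m, Fin (m1 i) → Fin mb → A) :
    ∑ i, ∑ j, ∑ l, X i j l = ∑ l, ∑ i, ∑ j, X i j l := by
  have := smul_swap3' (m1 := m1) (1 : ℤ) X
  simpa using this

theorem sum_swap3R (s : Finset ℤ) (cf : ℤ → R) {m mb : ℕ} {m1 : Fin m → ℕ}
    (X : ℤ → ∀ i : Fin m, Fin (m1 i) → Fin mb → A) :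
    ∑ rr ∈ s, cf rr • ∑ l, ∑ i, ∑ j, X rr i j l
      = ∑ l, ∑ i, ∑ j, ∑ rr ∈ s, cf rr • X rr i j l := by
  simp only [Finset.smul_sum]
  calc (∑ rr ∈ s, ∑ l, ∑ i, ∑ j, cf rr • X rr i j l)
      = ∑ l, ∑ rr ∈ s, ∑ i, ∑ j, cf rr • X rr i j l := Finset.sum_comm
    _ = ∑ l, ∑ i, ∑ rr ∈ s, ∑ j, cf rr • X rr i j l :=
        Finset.sum_congr rfl fun l _ => Finset.sum_comm
    _ = ∑ l, ∑ i, ∑ j, ∑ rr ∈ s, cf rr • X rr i j l :=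
        Finset.sum_congr rfl fun l _ => Finset.sum_congr rfl fun i _ => Finset.sum_comm

theorem sum_Icc_vanish (Gv : ℤ → R) (T : ℤ → A) (BF BG U : ℤ)
    (hGvG : ∀ rr : ℤ, rr < BG → Gv rr = 0)
    (hGvF : ∀ rr : ℤ, rr < BF → Gv rr = 0) :
    ∑ rr ∈ Finset.Icc BF U, Gv rr • T rr = ∑ rr ∈ Finset.Icc BG U, Gv rr • T rr := by
  have h1 : ∑ rr ∈ Finset.Icc BF U, Gv rr • T rr
      = ∑ rr ∈ Finset.Icc (min BF BG) U, Gv rr • T rr := by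
    refine Finset.sum_subset (Finset.Icc_subset_Icc_left (min_le_left _ _)) ?_
    intro rr hrr hrr'
    have h1 := Finset.mem_Icc.mp hrr
    have : rr < BF := by
      by_contra h
      exact hrr' (Finset.mem_Icc.mpr ⟨le_of_not_gt h, h1.2⟩)
    rw [hGvF rr this, zero_smul]
  have h2 : ∑ rr ∈ Finset.Icc BG U, Gv rr • T rr
      = ∑ rr ∈ Finset.Icc (min BF BG) U, Gv rr • T rr := by
    refine Finset.sum_subset (Finset.Icc_subset_Icc_left (min_le_right _ _)) ?_
    intro rr hrr hrr'
    have h1 := Finset.mem_Icc.mp hrr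
    have : rr < BG := by
      by_contra h
      exact hrr' (Finset.mem_Icc.mpr ⟨le_of_not_gt h, h1.2⟩)
    rw [hGvG rr this, zero_smul]
  rw [h1, h2]

/-- Raising the exponent in a thresholded `Q`-locality statement. -/
theorem sloc_raise {r : R} {M : ℕ} (Gv : ℤ → R) (BG : ℤ) (nn0 nn : ℕ)
    (hle : nn0 ≤ nn) (h0 : 0 ≤ (nn0 : ℤ) + BG) (f g : ℤ → ℤ → V)
    (h : ∀ p q : ℤ, ∃ r₀ : ℕ, ∀ r₁ : ℕ, r₀ ≤ r₁ →
      ModH r M (∑ rr ∈ Finset.Icc BG (BG + (r₁ : ℤ)),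
          Gv rr • zwMul ((nn0 : ℤ) + rr).toNat f p q) (zwMul nn0 g p q)) :
    ∀ p q : ℤ, ∃ r₀ : ℕ, ∀ r₁ : ℕ, r₀ ≤ r₁ →
      ModH r M (∑ rr ∈ Finset.Icc BG (BG + (r₁ : ℤ)),
          Gv rr • zwMul ((nn : ℤ) + rr).toNat f p q) (zwMul nn g p q) := by
  obtain ⟨d, rfl⟩ : ∃ d, nn = d + nn0 := ⟨nn - nn0, by omega⟩
  intro p q
  obtain ⟨r₀, hr⟩ := modH_zwMul_thresh d
    (fun r₁ p' q' => ∑ rr ∈ Finset.Icc BG (BG + (r₁ : ℤ)),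
      Gv rr • zwMul ((nn0 : ℤ) + rr).toNat f p' q')
    (zwMul nn0 g) h p q
  refine ⟨r₀, fun r₁ hr₁ => ?_⟩
  have key := hr r₁ hr₁
  have eL : zwMul d (fun p' q' => ∑ rr ∈ Finset.Icc BG (BG + (r₁ : ℤ)),
        Gv rr • zwMul ((nn0 : ℤ) + rr).toNat f p' q') p q
      = ∑ rr ∈ Finset.Icc BG (BG + (r₁ : ℤ)),
        Gv rr • zwMul (((d + nn0 : ℕ) : ℤ) + rr).toNat f p q := by
    rw [zwMul_sum_fun]
    refine Finset.sum_congr rfl fun rr hrr => ?_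
    rw [zwMul_rsmul, ← zwMul_add_exp]
    have hBG : BG ≤ rr := (Finset.mem_Icc.mp hrr).1
    congr 2
    omega
  have eR : zwMul d (zwMul nn0 g) p q = zwMul (d + nn0) g p q :=
    (zwMul_add_exp d nn0 g p q).symm
  rw [eL, eR] at key
  exact key

end SlocHelpers

section ZWtmul

variable {R : Type*} [CommRing R] {V : Type*} [AddCommGroup V] [Module R V]
variable {H : Type*} [AddCommGroup H] [Module R H]

theorem zwMul_tmul (h : H) (K : ℕ) (G : ℤ → ℤ → V) (p q : ℤ) :
    zwMul K (fun p' q' => (G p' q') ⊗ₜ[R] h) p q = (zwMul K G p q) ⊗ₜ[R] h := by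
  have := zwMul_map ((TensorProduct.mk R V H).flip h) K G p q
  simpa using this

theorem smulsum_tmul {s : Finset ℤ} (cf : ℤ → R) (f : ℤ → V) (h : H) :
    ∑ rr ∈ s, cf rr • ((f rr) ⊗ₜ[R] h) = (∑ rr ∈ s, cf rr • f rr) ⊗ₜ[R] h := by
  rw [TensorProduct.sum_tmul]
  exact Finset.sum_congr rfl fun rr _ => TensorProduct.smul_tmul' (cf rr) (f rr) h

end ZWtmul
section SmashSloc

variable {R : Type*} [CommRing R] {V : Type*} [AddCommGroup V] [Module R V]
variable {H : Type*} [Ring H] [HopfAlgebra R H]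
variable [Module H V] [IsScalarTower R H V] [SMulCommClass R H V]

theorem smash_sloc (F : VAData R V) (hHF : IsHModuleFA H F) (r : R) (M : ℕ)
    (Gh : V → V → ℤ → R) (BG : ℤ)
    (hGlb : ∀ (u w : V) (p : ℤ), p < BG → Gh u w p = 0)
    (hQloc : ∀ u w : V, ∃ nn : ℕ, 0 ≤ (nn : ℤ) + BG ∧
      ∀ (c : V) (p q : ℤ), ∃ r₀ : ℕ, ∀ r₁ : ℕ, r₀ ≤ r₁ →
        ModH r M (∑ rr ∈ Finset.Icc BG (BG + (r₁ : ℤ)),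
            Gh u w rr • zwMul ((nn : ℤ) + rr).toNat (F.prodZW u w c) p q)
          (zwMul nn (F.prodWZ u w c) p q))
    (Fh : (V ⊗[R] H) → (V ⊗[R] H) → ℤ → R) (BF : ℤ)
    (hFlb : ∀ (x y : V ⊗[R] H) (p : ℤ), p < BF → Fh x y p = 0)
    (u v : V) (a b : H)
    (hFGx : ∀ (x : H) (pp : ℤ), Fh (u ⊗ₜ[R] a) (v ⊗ₜ[R] b) pp = Gh u (x • v) pp) :
    ∃ (nn mm : ℕ) (A B : Fin mm → V ⊗[R] H),
      0 ≤ (nn : ℤ) + BF ∧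
      ∀ (c : V ⊗[R] H) (p q : ℤ), ∃ r₀ : ℕ, ∀ r₁ : ℕ, r₀ ≤ r₁ →
        ModH r M
          (∑ rr ∈ Finset.Icc BF (BF + (r₁ : ℤ)),
            Fh (u ⊗ₜ[R] a) (v ⊗ₜ[R] b) rr •
              zwMul ((nn : ℤ) + rr).toNat
                ((smashData F).prodZW (u ⊗ₜ[R] a) (v ⊗ₜ[R] b) c) p q)
          (∑ i, zwMul nn ((smashData F).prodWZ (A i) (B i) c) p q) := by
  classical
  obtain ⟨m, a1, a2, ha⟩ := tensor_exists_fin (Coalgebra.comul (R := R) a)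
  choose m1 a11 a12 ha1 using fun i => tensor_exists_fin (Coalgebra.comul (R := R) (a1 i))
  choose m2 a21 a22 ha2 using fun i => tensor_exists_fin (Coalgebra.comul (R := R) (a2 i))
  obtain ⟨mb, b1, b2, hb⟩ := tensor_exists_fin (Coalgebra.comul (R := R) b)
  choose nnf hnnf using hQloc
  set nnB : ℕ := Finset.univ.sup (fun i : Fin m =>
    Finset.univ.sup (fun j : Fin (m1 i) => nnf u (a11 i j • v))) with hnnB
  set nn : ℕ := max nnB (-BF).toNat with hnn
  have hnnle : ∀ (i : Fin m) (j : Fin (m1 i)), nnf u (a11 i j • v) ≤ nn := by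
    intro i j
    refine le_trans ?_ (le_max_left _ _)
    calc nnf u (a11 i j • v)
        ≤ Finset.univ.sup (fun j : Fin (m1 i) => nnf u (a11 i j • v)) :=
          Finset.le_sup (f := fun j : Fin (m1 i) => nnf u (a11 i j • v))
            (Finset.mem_univ j)
      _ ≤ nnB := Finset.le_sup (f := fun i : Fin m =>
            Finset.univ.sup (fun j : Fin (m1 i) => nnf u (a11 i j • v)))
            (Finset.mem_univ i)
  have hnnBF : 0 ≤ (nn : ℤ) + BF := by
    have : (-BF).toNat ≤ nn := le_max_right _ _
    omega
  refine ⟨nn, m, fun i => u ⊗ₜ[R] (a2 i * b), fun i => (a1 i • v) ⊗ₜ[R] (1 : H),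
    hnnBF, ?_⟩
  have core : ∀ (i : Fin m) (j : Fin (m1 i)) (c₀ : V), ∀ p q : ℤ,
      ∃ r₀ : ℕ, ∀ r₁ : ℕ, r₀ ≤ r₁ →
        ModH r M (∑ rr ∈ Finset.Icc BG (BG + (r₁ : ℤ)),
            Gh u (a11 i j • v) rr • zwMul ((nn : ℤ) + rr).toNat
              (F.prodZW u (a11 i j • v) c₀) p q)
          (zwMul nn (F.prodWZ u (a11 i j • v) c₀) p q) :=
    fun i j c₀ => sloc_raise (Gh u (a11 i j • v)) BG (nnf u (a11 i j • v)) nn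
      (hnnle i j) (hnnf u (a11 i j • v)).1 _ _ ((hnnf u (a11 i j • v)).2 c₀)
  intro c
  induction c using TensorProduct.induction_on with
  | zero =>
    intro p q
    refine ⟨0, fun r₁ _ => ?_⟩
    have e1 : ∀ K : ℕ, zwMul K ((smashData F).prodZW (u ⊗ₜ[R] a) (v ⊗ₜ[R] b) 0) p q
        = 0 := by
      intro K
      rw [show (smashData F).prodZW (u ⊗ₜ[R] a) (v ⊗ₜ[R] b) 0
          = fun _ _ => (0 : V ⊗[R] H) from
        funext fun p' => funext fun q' => (smashData F).prodZW_zero3 _ _ p' q',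
        zwMul_zero_fun]
    have e2 : ∀ i : Fin m, zwMul nn ((smashData F).prodWZ (u ⊗ₜ[R] (a2 i * b))
        ((a1 i • v) ⊗ₜ[R] (1 : H)) 0) p q = 0 := by
      intro i
      rw [show (smashData F).prodWZ (u ⊗ₜ[R] (a2 i * b)) ((a1 i • v) ⊗ₜ[R] (1 : H)) 0
          = fun _ _ => (0 : V ⊗[R] H) from
        funext fun p' => funext fun q' => (smashData F).prodWZ_zero3 _ _ p' q',
        zwMul_zero_fun]
    have z1 : (∑ rr ∈ Finset.Icc BF (BF + (r₁ : ℤ)),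
        Fh (u ⊗ₜ[R] a) (v ⊗ₜ[R] b) rr • zwMul ((nn : ℤ) + rr).toNat
          ((smashData F).prodZW (u ⊗ₜ[R] a) (v ⊗ₜ[R] b) 0) p q) = 0 :=
      Finset.sum_eq_zero fun rr _ => by rw [e1, smul_zero]
    have z2 : (∑ i : Fin m, zwMul nn ((smashData F).prodWZ (u ⊗ₜ[R] (a2 i * b))
        ((a1 i • v) ⊗ₜ[R] (1 : H)) 0) p q) = 0 :=
      Finset.sum_eq_zero fun i _ => e2 i
    rw [z1, z2]
    exact ModH.refl 0
  | add c₁ c₂ h1 h2 =>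
    intro p q
    obtain ⟨r₁₀, hr1⟩ := h1 p q
    obtain ⟨r₂₀, hr2⟩ := h2 p q
    refine ⟨max r₁₀ r₂₀, fun r₁ hr => ?_⟩
    have key := ModH.add (hr1 r₁ (le_trans (le_max_left _ _) hr))
      (hr2 r₁ (le_trans (le_max_right _ _) hr))
    have eL : (∑ rr ∈ Finset.Icc BF (BF + (r₁ : ℤ)),
        Fh (u ⊗ₜ[R] a) (v ⊗ₜ[R] b) rr • zwMul ((nn : ℤ) + rr).toNat
          ((smashData F).prodZW (u ⊗ₜ[R] a) (v ⊗ₜ[R] b) (c₁ + c₂)) p q)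
        = (∑ rr ∈ Finset.Icc BF (BF + (r₁ : ℤ)),
            Fh (u ⊗ₜ[R] a) (v ⊗ₜ[R] b) rr • zwMul ((nn : ℤ) + rr).toNat
              ((smashData F).prodZW (u ⊗ₜ[R] a) (v ⊗ₜ[R] b) c₁) p q)
          + (∑ rr ∈ Finset.Icc BF (BF + (r₁ : ℤ)),
            Fh (u ⊗ₜ[R] a) (v ⊗ₜ[R] b) rr • zwMul ((nn : ℤ) + rr).toNat
              ((smashData F).prodZW (u ⊗ₜ[R] a) (v ⊗ₜ[R] b) c₂) p q) := by
      rw [← Finset.sum_add_distrib]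
      refine Finset.sum_congr rfl fun rr _ => ?_
      rw [show (smashData F).prodZW (u ⊗ₜ[R] a) (v ⊗ₜ[R] b) (c₁ + c₂)
          = fun p' q' => (smashData F).prodZW (u ⊗ₜ[R] a) (v ⊗ₜ[R] b) c₁ p' q'
            + (smashData F).prodZW (u ⊗ₜ[R] a) (v ⊗ₜ[R] b) c₂ p' q' from
        funext fun p' => funext fun q' => (smashData F).prodZW_add3 _ _ c₁ c₂ p' q',
        zwMul_add_fun, smul_add]
    have eR : (∑ i : Fin m, zwMul nn ((smashData F).prodWZ (u ⊗ₜ[R] (a2 i * b))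
        ((a1 i • v) ⊗ₜ[R] (1 : H)) (c₁ + c₂)) p q)
        = (∑ i : Fin m, zwMul nn ((smashData F).prodWZ (u ⊗ₜ[R] (a2 i * b))
            ((a1 i • v) ⊗ₜ[R] (1 : H)) c₁) p q)
          + (∑ i : Fin m, zwMul nn ((smashData F).prodWZ (u ⊗ₜ[R] (a2 i * b))
            ((a1 i • v) ⊗ₜ[R] (1 : H)) c₂) p q) := by
      rw [← Finset.sum_add_distrib]
      refine Finset.sum_congr rfl fun i _ => ?_
      rw [show (smashData F).prodWZ (u ⊗ₜ[R] (a2 i * b)) ((a1 i • v) ⊗ₜ[R] (1 : H)) (c₁ + c₂)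
          = fun p' q' => (smashData F).prodWZ (u ⊗ₜ[R] (a2 i * b))
              ((a1 i • v) ⊗ₜ[R] (1 : H)) c₁ p' q'
            + (smashData F).prodWZ (u ⊗ₜ[R] (a2 i * b))
              ((a1 i • v) ⊗ₜ[R] (1 : H)) c₂ p' q' from
        funext fun p' => funext fun q' => (smashData F).prodWZ_add3 _ _ c₁ c₂ p' q',
        zwMul_add_fun]
    rw [eL, eR]
    exact key
  | tmul w' g =>
    intro p q
    -- expansions
    have expandZW : ∀ p' q' : ℤ,
        (smashData F).prodZW (u ⊗ₜ[R] a) (v ⊗ₜ[R] b) (w' ⊗ₜ[R] g) p' q'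
        = ∑ l, ∑ i, ∑ j,
            (F.prodZW u (a11 i j • v) (a12 i j • (b1 l • w')) p' q')
              ⊗ₜ[R] (a2 i * (b2 l * g)) := by
      intro p' q'
      show (smashData F).Y (u ⊗ₜ[R] a) (-p' - 1)
          ((smashData F).Y (v ⊗ₜ[R] b) (-q' - 1) (w' ⊗ₜ[R] g)) = _
      rw [smash_Y_Y_expand F hHF u v w' a b g (-p' - 1) (-q' - 1) m a1 a2 ha
        m1 a11 a12 ha1 mb b1 b2 hb]
      exact sum_rot3 _
    have expandWZ : ∀ (i : Fin m) (p' q' : ℤ),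
        (smashData F).prodWZ (u ⊗ₜ[R] (a2 i * b)) ((a1 i • v) ⊗ₜ[R] (1 : H))
          (w' ⊗ₜ[R] g) p' q'
        = ∑ j, ∑ l, (F.prodWZ u (a1 i • v) (a21 i j • (b1 l • w')) p' q')
            ⊗ₜ[R] (a22 i j * (b2 l * g)) := by
      intro i p' q'
      show (smashData F).Y ((a1 i • v) ⊗ₜ[R] (1 : H)) (-q' - 1)
          ((smashData F).Y (u ⊗ₜ[R] (a2 i * b)) (-p' - 1) (w' ⊗ₜ[R] g)) = _
      rw [smash_Y_mul_expand F u w' (a2 i) b g (-p' - 1) (m2 i) (a21 i) (a22 i)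
        (ha2 i) mb b1 b2 hb, map_sum]
      refine Finset.sum_congr rfl fun j _ => ?_
      rw [map_sum]
      exact Finset.sum_congr rfl fun l _ =>
        smash_Y_one_right F (a1 i • v) (-q' - 1) _ _
    choose r0f hr0f using fun (l : Fin mb) (i : Fin m) (j : Fin (m1 i)) =>
      core i j (a12 i j • (b1 l • w')) p q
    refine ⟨max (BG - BF).toNat (Finset.univ.sup (fun l : Fin mb =>
      Finset.univ.sup (fun i : Fin m => Finset.univ.sup (fun j : Fin (m1 i) =>
        ((r0f l i j : ℤ) + BG - BF).toNat)))), fun r₁ hr₁ => ?_⟩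
    set r₁' : ℕ := (BF + (r₁ : ℤ) - BG).toNat with hr₁'def
    have hup : BF + (r₁ : ℤ) = BG + (r₁' : ℤ) := by
      have h1 : (BG - BF).toNat ≤ r₁ := le_trans (le_max_left _ _) hr₁
      omega
    have hthr : ∀ (l : Fin mb) (i : Fin m) (j : Fin (m1 i)), r0f l i j ≤ r₁' := by
      intro l i j
      have h2 : ((r0f l i j : ℤ) + BG - BF).toNat ≤ r₁ := by
        refine le_trans ?_ (le_trans (le_max_right _ _) hr₁)
        calc ((r0f l i j : ℤ) + BG - BF).toNat
            ≤ Finset.univ.sup (fun j : Fin (m1 i) =>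
                ((r0f l i j : ℤ) + BG - BF).toNat) :=
              Finset.le_sup (f := fun j : Fin (m1 i) =>
                ((r0f l i j : ℤ) + BG - BF).toNat) (Finset.mem_univ j)
          _ ≤ Finset.univ.sup (fun i : Fin m => Finset.univ.sup (fun j : Fin (m1 i) =>
                ((r0f l i j : ℤ) + BG - BF).toNat)) :=
              Finset.le_sup (f := fun i : Fin m => Finset.univ.sup (fun j : Fin (m1 i) =>
                ((r0f l i j : ℤ) + BG - BF).toNat)) (Finset.mem_univ i)
          _ ≤ _ := Finset.le_sup (f := fun l : Fin mb =>
              Finset.univ.sup (fun i : Fin m => Finset.univ.sup (fun j : Fin (m1 i) =>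
                ((r0f l i j : ℤ) + BG - BF).toNat))) (Finset.mem_univ l)
      omega
    -- transform LHS
    have step1 : ∀ K : ℕ,
        zwMul K ((smashData F).prodZW (u ⊗ₜ[R] a) (v ⊗ₜ[R] b) (w' ⊗ₜ[R] g)) p q
        = ∑ l, ∑ i, ∑ j,
            (zwMul K (F.prodZW u (a11 i j • v) (a12 i j • (b1 l • w'))) p q)
              ⊗ₜ[R] (a2 i * (b2 l * g)) := by
      intro K
      rw [show (smashData F).prodZW (u ⊗ₜ[R] a) (v ⊗ₜ[R] b) (w' ⊗ₜ[R] g)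
          = fun p' q' => ∑ l, ∑ i, ∑ j,
            (F.prodZW u (a11 i j • v) (a12 i j • (b1 l • w')) p' q')
              ⊗ₜ[R] (a2 i * (b2 l * g)) from
        funext fun p' => funext fun q' => expandZW p' q', zwMul_sum_fun]
      refine Finset.sum_congr rfl fun l _ => ?_
      rw [zwMul_sum_fun]
      refine Finset.sum_congr rfl fun i _ => ?_
      rw [zwMul_sum_fun]
      exact Finset.sum_congr rfl fun j _ => zwMul_tmul _ _ _ _ _
    have eLHS : (∑ rr ∈ Finset.Icc BF (BF + (r₁ : ℤ)),
        Fh (u ⊗ₜ[R] a) (v ⊗ₜ[R] b) rr • zwMul ((nn : ℤ) + rr).toNat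
          ((smashData F).prodZW (u ⊗ₜ[R] a) (v ⊗ₜ[R] b) (w' ⊗ₜ[R] g)) p q)
        = ∑ l, ∑ i, ∑ j,
            (∑ rr ∈ Finset.Icc BG (BG + (r₁' : ℤ)),
              Gh u (a11 i j • v) rr • zwMul ((nn : ℤ) + rr).toNat
                (F.prodZW u (a11 i j • v) (a12 i j • (b1 l • w'))) p q)
              ⊗ₜ[R] (a2 i * (b2 l * g)) := by
      calc (∑ rr ∈ Finset.Icc BF (BF + (r₁ : ℤ)),
          Fh (u ⊗ₜ[R] a) (v ⊗ₜ[R] b) rr • zwMul ((nn : ℤ) + rr).toNat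
            ((smashData F).prodZW (u ⊗ₜ[R] a) (v ⊗ₜ[R] b) (w' ⊗ₜ[R] g)) p q)
          = ∑ rr ∈ Finset.Icc BF (BF + (r₁ : ℤ)),
              Fh (u ⊗ₜ[R] a) (v ⊗ₜ[R] b) rr • ∑ l, ∑ i, ∑ j,
                (zwMul ((nn : ℤ) + rr).toNat
                  (F.prodZW u (a11 i j • v) (a12 i j • (b1 l • w'))) p q)
                  ⊗ₜ[R] (a2 i * (b2 l * g)) :=
            Finset.sum_congr rfl fun rr _ => by rw [step1]
        _ = ∑ l, ∑ i, ∑ j, ∑ rr ∈ Finset.Icc BF (BF + (r₁ : ℤ)),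
              Fh (u ⊗ₜ[R] a) (v ⊗ₜ[R] b) rr •
                ((zwMul ((nn : ℤ) + rr).toNat
                  (F.prodZW u (a11 i j • v) (a12 i j • (b1 l • w'))) p q)
                  ⊗ₜ[R] (a2 i * (b2 l * g))) := sum_swap3R _ _ _
        _ = ∑ l, ∑ i, ∑ j, ∑ rr ∈ Finset.Icc BG (BG + (r₁' : ℤ)),
              Gh u (a11 i j • v) rr •
                ((zwMul ((nn : ℤ) + rr).toNat
                  (F.prodZW u (a11 i j • v) (a12 i j • (b1 l • w'))) p q)
                  ⊗ₜ[R] (a2 i * (b2 l * g))) := by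
            refine Finset.sum_congr rfl fun l _ => Finset.sum_congr rfl fun i _ =>
              Finset.sum_congr rfl fun j _ => ?_
            rw [Finset.sum_congr rfl fun rr (_ : rr ∈ Finset.Icc BF (BF + (r₁ : ℤ))) => by
              rw [hFGx (a11 i j)]]
            rw [hup]
            exact sum_Icc_vanish (Gh u (a11 i j • v)) _ BF BG (BG + (r₁' : ℤ))
              (fun rr hrr => hGlb u (a11 i j • v) rr hrr)
              (fun rr hrr => by rw [← hFGx (a11 i j)]; exact hFlb _ _ rr hrr)
        _ = _ := by
            refine Finset.sum_congr rfl fun l _ => Finset.sum_congr rfl fun i _ =>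
              Finset.sum_congr rfl fun j _ => ?_
            exact smulsum_tmul _ _ _
    -- transform RHS
    have eRHS : (∑ i : Fin m, zwMul nn ((smashData F).prodWZ (u ⊗ₜ[R] (a2 i * b))
          ((a1 i • v) ⊗ₜ[R] (1 : H)) (w' ⊗ₜ[R] g)) p q)
        = ∑ l, ∑ i, ∑ j,
            (zwMul nn (F.prodWZ u (a11 i j • v) (a12 i j • (b1 l • w'))) p q)
              ⊗ₜ[R] (a2 i * (b2 l * g)) := by
      calc (∑ i : Fin m, zwMul nn ((smashData F).prodWZ (u ⊗ₜ[R] (a2 i * b))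
            ((a1 i • v) ⊗ₜ[R] (1 : H)) (w' ⊗ₜ[R] g)) p q)
          = ∑ i, ∑ j, ∑ l,
              (zwMul nn (F.prodWZ u (a1 i • v) (a21 i j • (b1 l • w'))) p q)
                ⊗ₜ[R] (a22 i j * (b2 l * g)) := by
            refine Finset.sum_congr rfl fun i _ => ?_
            rw [show (smashData F).prodWZ (u ⊗ₜ[R] (a2 i * b))
                ((a1 i • v) ⊗ₜ[R] (1 : H)) (w' ⊗ₜ[R] g)
                = fun p' q' => ∑ j, ∑ l,
                  (F.prodWZ u (a1 i • v) (a21 i j • (b1 l • w')) p' q')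
                    ⊗ₜ[R] (a22 i j * (b2 l * g)) from
              funext fun p' => funext fun q' => expandWZ i p' q', zwMul_sum_fun]
            refine Finset.sum_congr rfl fun j _ => ?_
            rw [zwMul_sum_fun]
            exact Finset.sum_congr rfl fun l _ => zwMul_tmul _ _ _ _ _
        _ = ∑ l, ∑ i, ∑ j,
              (zwMul nn (F.prodWZ u (a1 i • v) (a21 i j • (b1 l • w'))) p q)
                ⊗ₜ[R] (a22 i j * (b2 l * g)) := sum_rot3 _
        _ = _ := by
            refine Finset.sum_congr rfl fun l _ => ?_
            have := (coassoc_B_sum (F.prodWZB nn u p q) v (b1 l • w') (b2 l * g) a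
              m a1 a2 ha m1 a11 a12 ha1 m2 a21 a22 ha2).symm
            simpa only [VAData.prodWZB_apply] using this
    rw [eLHS, eRHS]
    refine ModH.sum _ _ _ fun l _ => ModH.sum _ _ _ fun i _ =>
      ModH.sum _ _ _ fun j _ => ?_
    exact ModH.map ((TensorProduct.mk R V H).flip (a2 i * (b2 l * g)))
      (hr0f l i j r₁' (hthr l i j))

end SmashSloc
/-- Let `(V, Y, 1, s, Q)` be an `H`-module quantum vertex algebra
over `k[[h]]` (a topological state-field correspondence together with a braiding `Q`,
satisfying truncation, weak associativity and `Q`-locality modulo every power `h^M`,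
with `Q` acting diagonally with scalar symbol `G_h ∈ k((z))[[h]]`).  Let
`Y^{V#H}(u#a,z)(v#b) = ∑ Y(u,z)(a₁v) # a₂b` on `V#H = V ⊗ H` and suppose the braiding
`Q^{V#H}` on `V#H` is diagonal, `Q^{V#H}((u#a)⊗(v#b)) = (u#a)⊗(v#b)⊗F_h(u#a,v#b)`,
with `F_h(u#a,v#b) = G_h(u,a₁v)` for all terms `a₁` of `Δ(a)`.  Then
`(V#H, Y^{V#H}, 1#1, s#1, Q^{V#H})` is an `S`-local quantum vertex algebra: it
satisfies the weak associativity relation and the `QS`-locality identity modulo every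
power `h^M`. -/
theorem statement19 {k : Type*} [Field k] [CharZero k]
    {V : Type*} [AddCommGroup V] [Module (PowerSeries k) V]
    {H : Type*} [Ring H] [HopfAlgebra (PowerSeries k) H]
    [Module H V] [IsScalarTower (PowerSeries k) H V] [SMulCommClass (PowerSeries k) H V]
    (F : VAData (PowerSeries k) V)
    -- topological state-field correspondence: truncation holds modulo every `h^M`
    (htrunc : ∀ (a b : V) (M : ℕ), ∃ N : ℤ, ∀ n : ℤ, N ≤ n →
        ModH (PowerSeries.X : PowerSeries k) M (F.Y a n b) 0)
    (hvac1 : ∀ (a : V) (n : ℤ), F.Y F.vac n a = if n = -1 then a else 0)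
    (hvac2 : ∀ (a : V) (n : ℤ), 0 ≤ n → F.Y a n F.vac = 0)
    (hvac3 : ∀ a : V, F.Y a (-1) F.vac = a)
    (hvac4 : ∀ a : V, F.Y a (-2) F.vac = F.T a)
    (htr1 : ∀ (a b : V) (n : ℤ), F.Y (F.T a) n b = F.T (F.Y a n b) - F.Y a n (F.T b))
    (htr2 : ∀ (a b : V) (n : ℤ), F.Y (F.T a) n b = (-n : ℤ) • F.Y a (n - 1) b)
    -- weak associativity modulo every power of `h`
    (hassoc : ∀ (a b c : V) (M : ℕ), ∃ N : ℕ, ∀ p q : ℤ, ∃ J₀ : ℕ, ∀ J : ℕ, J₀ ≤ J →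
        ModH (PowerSeries.X : PowerSeries k) M
          (zwMul N (F.compLHStr J a b c) p q) (zwMul N (F.compRHS a b c) p q))
    -- the braiding `Q` of `V`, diagonal with symbol `Gh ∈ k((z))[[h]]`, `Q = 1 + O(h)`
    (QV : (V ⊗[PowerSeries k] V) →ₗ[PowerSeries k] (ℤ → V ⊗[PowerSeries k] V))
    (hQunit : ∀ (u : V ⊗[PowerSeries k] V) (p : ℤ),
        ModH (PowerSeries.X : PowerSeries k) 1 (QV u p) (if p = 0 then u else 0))
    (Gh : V → V → ℤ → PowerSeries k) (BG : ℤ)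
    (hGlb : ∀ (u w : V) (p : ℤ), p < BG → Gh u w p = 0)
    (hGdiag : ∀ (u w : V) (p : ℤ),
        QV (u ⊗ₜ[PowerSeries k] w) p = Gh u w p • (u ⊗ₜ[PowerSeries k] w))
    -- `Q`-locality of `V` modulo every power of `h`
    (hQloc : ∀ (u w : V) (M : ℕ), ∃ nn : ℕ, 0 ≤ (nn : ℤ) + BG ∧
        ∀ (c : V) (p q : ℤ), ∃ r₀ : ℕ, ∀ r₁ : ℕ, r₀ ≤ r₁ →
          ModH (PowerSeries.X : PowerSeries k) M
            (∑ r ∈ Finset.Icc BG (BG + (r₁ : ℤ)),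
              Gh u w r • zwMul ((nn : ℤ) + r).toNat (F.prodZW u w c) p q)
            (zwMul nn (F.prodWZ u w c) p q))
    -- `V` is an `H`-module quantum vertex algebra
    (hHF : IsHModuleFA H F)
    -- the braiding on `V#H`, diagonal with symbol `Fh`, `Q^{V#H} = 1 + O(h)`
    (QS : ((V ⊗[PowerSeries k] H) ⊗[PowerSeries k] (V ⊗[PowerSeries k] H))
            →ₗ[PowerSeries k]
          (ℤ → (V ⊗[PowerSeries k] H) ⊗[PowerSeries k] (V ⊗[PowerSeries k] H)))
    (hQSunit : ∀ (u : (V ⊗[PowerSeries k] H) ⊗[PowerSeries k] (V ⊗[PowerSeries k] H))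
        (p : ℤ), ModH (PowerSeries.X : PowerSeries k) 1 (QS u p) (if p = 0 then u else 0))
    (Fh : (V ⊗[PowerSeries k] H) → (V ⊗[PowerSeries k] H) → ℤ → PowerSeries k) (BF : ℤ)
    (hFlb : ∀ (x y : V ⊗[PowerSeries k] H) (p : ℤ), p < BF → Fh x y p = 0)
    (hFdiag : ∀ (x y : V ⊗[PowerSeries k] H) (p : ℤ),
        QS (x ⊗ₜ[PowerSeries k] y) p = Fh x y p • (x ⊗ₜ[PowerSeries k] y))
    -- compatibility `F_h(u#a, v#b) = G_h(u, a₁v)` for all terms of `Δ(a)`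
    (hFG : ∀ (u v : V) (a b : H) (m : ℕ) (a1 a2 : Fin m → H),
        Coalgebra.comul (R := PowerSeries k) a = ∑ i, a1 i ⊗ₜ[PowerSeries k] a2 i →
        ∀ (i : Fin m) (p : ℤ),
          Fh (u ⊗ₜ[PowerSeries k] a) (v ⊗ₜ[PowerSeries k] b) p = Gh u (a1 i • v) p) :
    ∃ FS : VAData (PowerSeries k) (V ⊗[PowerSeries k] H),
      SmashChar H F FS ∧
      FS.vac = F.vac ⊗ₜ[PowerSeries k] (1 : H) ∧
      -- weak associativity for `V#H` modulo every power of `h`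
      (∀ (x y c : V ⊗[PowerSeries k] H) (M : ℕ), ∃ N : ℕ, ∀ p q : ℤ,
        ∃ J₀ : ℕ, ∀ J : ℕ, J₀ ≤ J →
          ModH (PowerSeries.X : PowerSeries k) M
            (zwMul N (FS.compLHStr J x y c) p q) (zwMul N (FS.compRHS x y c) p q)) ∧
      -- `QS`-locality for `V#H` modulo every power of `h`
      (∀ (u v : V) (a b : H) (M : ℕ),
        ∃ (nn mm : ℕ) (A B : Fin mm → V ⊗[PowerSeries k] H),
          0 ≤ (nn : ℤ) + BF ∧
          ∀ (c : V ⊗[PowerSeries k] H) (p q : ℤ), ∃ r₀ : ℕ, ∀ r₁ : ℕ, r₀ ≤ r₁ →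
            ModH (PowerSeries.X : PowerSeries k) M
              (∑ r ∈ Finset.Icc BF (BF + (r₁ : ℤ)),
                Fh (u ⊗ₜ[PowerSeries k] a) (v ⊗ₜ[PowerSeries k] b) r •
                  zwMul ((nn : ℤ) + r).toNat
                    (FS.prodZW (u ⊗ₜ[PowerSeries k] a) (v ⊗ₜ[PowerSeries k] b) c) p q)
              (∑ i, zwMul nn (FS.prodWZ (A i) (B i) c) p q)) := by
  classical
  refine ⟨smashData F, smashData_char F, rfl, ?_, ?_⟩
  · intro x y c M
    exact smash_assoc F hHF PowerSeries.X M (fun a b c => hassoc a b c M) x y c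
  · intro u v a b M
    have hFGx : ∀ (x : H) (pp : ℤ),
        Fh (u ⊗ₜ[PowerSeries k] a) (v ⊗ₜ[PowerSeries k] b) pp = Gh u (x • v) pp := by
      intro x pp
      obtain ⟨m₀, c1, c2, hc⟩ := tensor_exists_fin (Coalgebra.comul (R := PowerSeries k) a)
      have hrep : Coalgebra.comul (R := PowerSeries k) a
          = ∑ i : Fin (m₀ + 1),
              (Fin.cons x c1 : Fin (m₀ + 1) → H) i ⊗ₜ[PowerSeries k]
                (Fin.cons 0 c2 : Fin (m₀ + 1) → H) i := by
        rw [Fin.sum_univ_succ]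
        simp [hc]
      have := hFG u v a b (m₀ + 1) (Fin.cons x c1) (Fin.cons 0 c2) hrep 0 pp
      simpa using this
    exact smash_sloc F hHF PowerSeries.X M Gh BG hGlb (fun u w => hQloc u w M)
      Fh BF hFlb u v a b hFGx

end HopfVA
end
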